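/- arXiv:2001.06676 — 8 statements merged into one kernel-verified Lean document; each statement's English description precedes it below -/
import Mathlib

section
/- Let G = (A;E) be C²_ω, the countably infinite graph that is a disjoint union of ω edges, f : A^k → A a quasi near-unanimity operation preserving E, N and uuE, and R ⊆ A⁴ a quaternary relation preserved by f, invariant under all automorphisms of G, containing an E=-tuple t and an =E-tuple t′ with N(t[2],t[3]) and N(t′[2],t′[3]). Let m ∈ {1,…,k}. If for all {E,=}-connected pairs (u,s) of k-tuples with u constant and n_E(u,s) = m we have E(f(u),f(s)) (respectively f(u) = f(s)), then either for all {E,=}-connected pairs (u,s) with u constant and n_E(u,s) ∈ {k−m, k−m+1} we have f(u) = f(s) (respectively E(f(u),f(s))), or R contains an EE-tuple (respectively an ==-tuple). -/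
universe u

variable {A : Type u}

/-- Non-adjacency relation `N` of a graph with edge relation `E`. -/
def NRel (E : A → A → Prop) (a b : A) : Prop := a ≠ b ∧ ¬ E a b

/-- `uu O` denotes `O ∪ =`. -/
def uu (O : A → A → Prop) (a b : A) : Prop := O a b ∨ a = b

/-- `E` is the edge relation of a simple graph: symmetric and irreflexive. -/
def IsSimpleGraph (E : A → A → Prop) : Prop :=
  (∀ a b, E a b → E b a) ∧ (∀ a, ¬ E a a)

/-- An `n`-ary operation preserves an `m`-ary relation. -/
def Preserves {n m : ℕ} (f : (Fin n → A) → A) (R : Set (Fin m → A)) : Prop :=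
  ∀ t : Fin n → (Fin m → A), (∀ i, t i ∈ R) → (fun j => f (fun i => t i j)) ∈ R

/-- An `n`-ary operation preserves a binary relation `S`. -/
def PreservesRel {n : ℕ} (f : (Fin n → A) → A) (S : A → A → Prop) : Prop :=
  ∀ u v : Fin n → A, (∀ i, S (u i) (v i)) → S (f u) (f v)

/-- A binary (curried) operation preserves an `m`-ary relation. -/
def Preserves2 {m : ℕ} (f : A → A → A) (R : Set (Fin m → A)) : Prop :=
  ∀ t₁ t₂, t₁ ∈ R → t₂ ∈ R → (fun j => f (t₁ j) (t₂ j)) ∈ R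

/-- A ternary (curried) operation preserves an `m`-ary relation. -/
def Preserves3 {m : ℕ} (f : A → A → A → A) (R : Set (Fin m → A)) : Prop :=
  ∀ t₁ t₂ t₃, t₁ ∈ R → t₂ ∈ R → t₃ ∈ R → (fun j => f (t₁ j) (t₂ j) (t₃ j)) ∈ R

/-- `t` is an `OP`-tuple: `(t[1],t[2]) ∈ O` and `(t[3],t[4]) ∈ P`. -/
def IsOP (O P : A → A → Prop) (t : Fin 4 → A) : Prop := O (t 0) (t 1) ∧ P (t 2) (t 3)

/-- A quaternary relation entails a formula `ψ(x₁,x₂,x₃,x₄)`. -/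
def Entails (R : Set (Fin 4 → A)) (ψ : A → A → A → A → Prop) : Prop :=
  ∀ t ∈ R, ψ (t 0) (t 1) (t 2) (t 3)

/-- `R` efficiently entails `S₁(x₁,x₂) → S₂(x₃,x₄)`. -/
def EffEntails (R : Set (Fin 4 → A)) (S₁ S₂ : A → A → Prop) : Prop :=
  (∀ t ∈ R, S₁ (t 0) (t 1) → S₂ (t 2) (t 3)) ∧
  (∃ t ∈ R, S₁ (t 0) (t 1) ∧ S₂ (t 2) (t 3)) ∧
  (∃ t ∈ R, ¬ S₁ (t 0) (t 1) ∧ ¬ S₂ (t 2) (t 3))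

/-- `f` is a quasi near-unanimity operation. -/
def IsQnu {k : ℕ} (f : (Fin k → A) → A) : Prop :=
  ∀ x y : A, ∀ j : Fin k, f (Function.update (fun _ => x) j y) = f (fun _ => x)

/-- `α` is an automorphism of the graph `(A;E)`. -/
def IsGraphAuto (E : A → A → Prop) (α : A ≃ A) : Prop := ∀ a b, E (α a) (α b) ↔ E a b

/-- `R` is invariant under all automorphisms of `(A;E)`. -/
def AutoInvariant {m : ℕ} (E : A → A → Prop) (R : Set (Fin m → A)) : Prop :=
  ∀ α : A ≃ A, IsGraphAuto E α → ∀ t ∈ R, (fun i => α (t i)) ∈ R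

/-- The extension property of the random graph. -/
def ExtensionProperty (E : A → A → Prop) : Prop :=
  ∀ U U' : Finset A, Disjoint U U' →
    ∃ v : A, (∀ u ∈ U, E v u) ∧ (∀ u ∈ U', ¬ E v u)

/-- A binary operation is injective. -/
def BinInj (f : A → A → A) : Prop := Function.Injective (fun p : A × A => f p.1 p.2)

/-- A ternary operation is injective. -/
def TernInj (f : A → A → A → A) : Prop :=
  Function.Injective (fun p : A × A × A => f p.1 p.2.1 p.2.2)

/-- A binary injection is balanced. -/
def BalancedBin (E : A → A → Prop) (f : A → A → A) : Prop :=
  ∀ a₁ a₂ b₁ b₂ : A,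
    (((E a₁ b₁ ∧ a₂ = b₂) ∨ (a₁ = b₁ ∧ E a₂ b₂)) → E (f a₁ a₂) (f b₁ b₂)) ∧
    (((NRel E a₁ b₁ ∧ a₂ = b₂) ∨ (a₁ = b₁ ∧ NRel E a₂ b₂)) → NRel E (f a₁ a₂) (f b₁ b₂))

/-- A binary operation is `E`-dominated. -/
def EDominated (E : A → A → Prop) (f : A → A → A) : Prop :=
  ∀ a₁ a₂ b₁ b₂ : A, ((a₁ = b₁ ∧ a₂ ≠ b₂) ∨ (a₁ ≠ b₁ ∧ a₂ = b₂)) → E (f a₁ a₂) (f b₁ b₂)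

/-- A binary operation is `N`-dominated. -/
def NDominated (E : A → A → Prop) (f : A → A → A) : Prop :=
  ∀ a₁ a₂ b₁ b₂ : A, ((a₁ = b₁ ∧ a₂ ≠ b₂) ∨ (a₁ ≠ b₁ ∧ a₂ = b₂)) → NRel E (f a₁ a₂) (f b₁ b₂)

/-- A binary operation is of behaviour min. -/
def BehMin (E : A → A → Prop) (f : A → A → A) : Prop :=
  ∀ a₁ a₂ b₁ b₂ : A, a₁ ≠ b₁ → a₂ ≠ b₂ →
    (E (f a₁ a₂) (f b₁ b₂) ↔ (E a₁ b₁ ∧ E a₂ b₂))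

/-- A binary operation is of behaviour max. -/
def BehMax (E : A → A → Prop) (f : A → A → A) : Prop :=
  ∀ a₁ a₂ b₁ b₂ : A, a₁ ≠ b₁ → a₂ ≠ b₂ →
    (NRel E (f a₁ a₂) (f b₁ b₂) ↔ (NRel E a₁ b₁ ∧ NRel E a₂ b₂))

/-- A binary operation is of behaviour projection. -/
def BehProj (E : A → A → Prop) (f : A → A → A) : Prop :=
  (∀ a₁ a₂ b₁ b₂ : A, a₁ ≠ b₁ → a₂ ≠ b₂ → (E (f a₁ a₂) (f b₁ b₂) ↔ E a₁ b₁)) ∨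
  (∀ a₁ a₂ b₁ b₂ : A, a₁ ≠ b₁ → a₂ ≠ b₂ → (E (f a₁ a₂) (f b₁ b₂) ↔ E a₂ b₂))

/-- A binary operation is of behaviour xor. -/
def BehXor (E : A → A → Prop) (f : A → A → A) : Prop :=
  ∀ a₁ a₂ b₁ b₂ : A, a₁ ≠ b₁ → a₂ ≠ b₂ →
    (E (f a₁ a₂) (f b₁ b₂) ↔ Xor' (E a₁ b₁) (E a₂ b₂))

/-- A binary operation is of behaviour xnor. -/
def BehXnor (E : A → A → Prop) (f : A → A → A) : Prop :=
  ∀ a₁ a₂ b₁ b₂ : A, a₁ ≠ b₁ → a₂ ≠ b₂ →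
    (E (f a₁ a₂) (f b₁ b₂) ↔ (E a₁ b₁ ↔ E a₂ b₂))

/-- A binary operation is `E`-constant: its image induces a clique. -/
def EConstantBin (E : A → A → Prop) (f : A → A → A) : Prop :=
  ∀ a₁ a₂ b₁ b₂ : A, f a₁ a₂ ≠ f b₁ b₂ → E (f a₁ a₂) (f b₁ b₂)

/-- A binary operation is `N`-constant: its image induces an independent set. -/
def NConstantBin (E : A → A → Prop) (f : A → A → A) : Prop :=
  ∀ a₁ a₂ b₁ b₂ : A, f a₁ a₂ ≠ f b₁ b₂ → NRel E (f a₁ a₂) (f b₁ b₂)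

/-- A ternary operation is of behaviour majority. -/
def BehMajority (E : A → A → Prop) (f : A → A → A → A) : Prop :=
  ∀ a₁ a₂ a₃ b₁ b₂ b₃ : A, a₁ ≠ b₁ → a₂ ≠ b₂ → a₃ ≠ b₃ →
    (E (f a₁ a₂ a₃) (f b₁ b₂ b₃) ↔
      ((E a₁ b₁ ∧ E a₂ b₂) ∨ (E a₁ b₁ ∧ E a₃ b₃) ∨ (E a₂ b₂ ∧ E a₃ b₃)))

/-- A ternary operation is of behaviour minority. -/
def BehMinority (E : A → A → Prop) (f : A → A → A → A) : Prop :=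
  ∀ a₁ a₂ a₃ b₁ b₂ b₃ : A, a₁ ≠ b₁ → a₂ ≠ b₂ → a₃ ≠ b₃ →
    (NRel E (f a₁ a₂ a₃) (f b₁ b₂ b₃) ↔
      ((NRel E a₁ b₁ ∧ NRel E a₂ b₂ ∧ NRel E a₃ b₃) ∨
       (E a₁ b₁ ∧ E a₂ b₂ ∧ NRel E a₃ b₃) ∨
       (E a₁ b₁ ∧ NRel E a₂ b₂ ∧ E a₃ b₃) ∨
       (NRel E a₁ b₁ ∧ E a₂ b₂ ∧ E a₃ b₃)))

/-- A ternary operation hyperplanely has the binary behaviour `P`. -/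
def Hyperplanely (P : (A → A → A) → Prop) (f : A → A → A → A) : Prop :=
  ∀ c : A, P (fun x y => f x y c) ∧ P (fun x y => f x c y) ∧ P (fun x y => f c x y)

/-- `n_E(u,s)`: the number of coordinates at which `u` and `s` are `E`-related. -/
noncomputable def nECount {k : ℕ} (E : A → A → Prop) (u s : Fin k → A) : ℕ :=
  {i : Fin k | E (u i) (s i)}.ncard

/-- A constant tuple. -/
def IsConstTuple {k : ℕ} (u : Fin k → A) : Prop := ∃ c, ∀ i, u i = c

/-- `h` maps any argument containing an `N`-pair to an `N`-pair and behaves like a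
minority on `{E,=}`. -/
def HMinority (E : A → A → Prop) (h : A → A → A → A) : Prop :=
  (∀ a₁ a₂ a₃ b₁ b₂ b₃ : A,
    (NRel E a₁ b₁ ∨ NRel E a₂ b₂ ∨ NRel E a₃ b₃) →
      NRel E (h a₁ a₂ a₃) (h b₁ b₂ b₃)) ∧
  (∀ a₁ a₂ a₃ b₁ b₂ b₃ : A,
    uu E a₁ b₁ → uu E a₂ b₂ → uu E a₃ b₃ →
      (E (h a₁ a₂ a₃) (h b₁ b₂ b₃) ↔
        ((E a₁ b₁ ∧ E a₂ b₂ ∧ E a₃ b₃) ∨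
         (E a₁ b₁ ∧ ¬ E a₂ b₂ ∧ ¬ E a₃ b₃) ∨
         (¬ E a₁ b₁ ∧ E a₂ b₂ ∧ ¬ E a₃ b₃) ∨
         (¬ E a₁ b₁ ∧ ¬ E a₂ b₂ ∧ E a₃ b₃))))

/-- The vertex set of `C²_ω`, the disjoint union of ω edges. -/
abbrev Vtx : Type := ℕ × Bool

/-- The edge relation of `C²_ω`: `(n,b)` is adjacent to `(m,c)` iff `n = m` and `b ≠ c`. -/
def Ematch (a b : Vtx) : Prop := a.1 = b.1 ∧ a.2 ≠ b.2

/-- `u` and `s` are `{E,=}`-connected: every coordinate pair is in `E ∪ =`. -/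
def EEqConn {k : ℕ} (E : Vtx → Vtx → Prop) (u s : Fin k → Vtx) : Prop :=
  ∀ i, E (u i) (s i) ∨ u i = s i

/-!
Automorphisms of `C²_ω` act transitively on pairs of vertices lying in different edges, so `R`
contains every `(x, x', y, y)` and every `(x, x, y, y')` with `E(x, x')`, `E(y, y')` and `x`, `y` in
different edges. If `u = (y, …, y)` and `s` leaves `u` along the edge of `y` exactly on a set `T`
with `|T| = k - m`, apply `f` to the tuples that are `(x, x, y, y')` on `T` and `(x, x', y, y)`
off `T`: the image lies in `R`, its first pair has `n_E = m`, and its second pair is `(f u, f s)`.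
If `|T| = k - m + 1`, one coordinate of `T` gets `(x, x', y', y')` instead, and by quasi
near-unanimity the third entry is still `f u`. As `f` preserves `E ∪ =`, the pair `(f u, f s)`
is either adjacent or equal, which yields the dichotomy.
-/

theorem Equiv.Perm.exists_apply_eq_and_apply_eq {α : Type*} [DecidableEq α] {a b x y : α}
    (hab : a ≠ b) (hxy : x ≠ y) : ∃ π : Equiv.Perm α, π a = x ∧ π b = y := by
  refine ⟨(Equiv.swap a x).trans (Equiv.swap (Equiv.swap a x b) y), ?_, by simp⟩
  have hx : x ≠ Equiv.swap a x b := by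
    rw [Equiv.swap_apply_def]; split_ifs <;> grind
  simp [Equiv.swap_apply_of_ne_of_ne hx hxy]

section

variable {A : Type*} {k : ℕ} {f : (Fin k → A) → A} {R : Set (Fin 4 → A)} {x x' y y' : A}

theorem Preserves.piecewise_mem (hf : Preserves f R) (h₁ : ![x, x', y, y] ∈ R)
    (h₂ : ![x, x, y, y'] ∈ R) (T : Finset (Fin k)) :
    ![f fun _ => x, f (Tᶜ.piecewise (fun _ => x') fun _ => x),
      f fun _ => y, f (T.piecewise (fun _ => y') fun _ => y)] ∈ R := by
  convert hf (fun i => if i ∈ T then ![x, x, y, y'] else ![x, x', y, y])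
    (fun i => by split_ifs <;> assumption) using 1
  ext j
  fin_cases j <;> simp <;> (congr 1; funext i; by_cases hi : i ∈ T <;> simp [hi])

theorem Preserves.piecewise_insert_mem (hf : Preserves f R) (hqnu : IsQnu f)
    (h₁ : ![x, x', y, y] ∈ R) (h₂ : ![x, x, y, y'] ∈ R) (h₃ : ![x, x', y', y'] ∈ R)
    {T : Finset (Fin k)} {i₀ : Fin k} (hi₀ : i₀ ∈ T) :
    ![f fun _ => x, f ((insert i₀ Tᶜ).piecewise (fun _ => x') fun _ => x),
      f fun _ => y, f (T.piecewise (fun _ => y') fun _ => y)] ∈ R := by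
  rw [← hqnu y y' i₀]
  convert hf (fun i => if i = i₀ then ![x, x', y', y'] else if i ∈ T then ![x, x, y, y']
    else ![x, x', y, y]) (fun i => by split_ifs <;> assumption) using 1
  ext j
  fin_cases j <;> simp <;> congr 1 <;> funext i <;>
    by_cases hi : i = i₀ <;> by_cases hi' : i ∈ T <;> simp [hi, hi', hi₀]

end

def Vtx.partner (a : Vtx) : Vtx := (a.1, !a.2)

@[simp] theorem Vtx.partner_fst (a : Vtx) : a.partner.1 = a.1 := rfl

@[simp] theorem Vtx.partner_snd (a : Vtx) : a.partner.2 = !a.2 := rfl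

theorem Vtx.ematch_partner (a : Vtx) : Ematch a a.partner := ⟨rfl, by simp⟩

theorem Ematch.eq_partner {a b : Vtx} (h : Ematch a b) : b = a.partner := by
  obtain ⟨h1, h2⟩ := h
  ext
  · exact h1.symm
  · exact Bool.eq_not_iff.2 (Ne.symm h2)

theorem nrel_ematch_iff {a b : Vtx} : NRel Ematch a b ↔ a.1 ≠ b.1 :=
  ⟨fun ⟨hne, hE⟩ h1 => hE ⟨h1, fun h2 => hne (Prod.ext h1 h2)⟩,
    fun h => ⟨fun hab => h (congrArg Prod.fst hab), fun hE => h hE.1⟩⟩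

theorem isGraphAuto_prodShear (π : ℕ ≃ ℕ) (e : ℕ → Equiv.Perm Bool) :
    IsGraphAuto Ematch (Equiv.prodShear π e) := by
  rintro ⟨n, b⟩ ⟨p, c⟩
  simp only [Ematch, Equiv.prodShear_apply, π.injective.eq_iff, ne_eq]
  constructor <;> rintro ⟨rfl, h⟩ <;> exact ⟨rfl, by simpa using h⟩

theorem exists_isGraphAuto_apply_eq {a b x y : Vtx} (hab : a.1 ≠ b.1) (hxy : x.1 ≠ y.1) :
    ∃ α : Vtx ≃ Vtx, IsGraphAuto Ematch α ∧ α a = x ∧ α b = y := by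
  obtain ⟨π, hπa, hπb⟩ := Equiv.Perm.exists_apply_eq_and_apply_eq hab hxy
  refine ⟨Equiv.prodShear π fun n => if n = a.1 then Equiv.swap a.2 x.2
    else if n = b.1 then Equiv.swap b.2 y.2 else 1, isGraphAuto_prodShear _ _, ?_, ?_⟩
  · ext <;> simp [hπa]
  · ext <;> simp [hπb, hab.symm]

theorem IsGraphAuto.apply_partner {α : Vtx ≃ Vtx} (hα : IsGraphAuto Ematch α) (a : Vtx) :
    α a.partner = (α a).partner :=
  Ematch.eq_partner ((hα _ _).2 a.ematch_partner)

theorem AutoInvariant.edge_eq_mem {R : Set (Fin 4 → Vtx)} (hinv : AutoInvariant Ematch R)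
    (hR : ∃ t ∈ R, IsOP Ematch (· = ·) t ∧ NRel Ematch (t 1) (t 2)) {x y : Vtx}
    (hxy : x.1 ≠ y.1) : ![x, x.partner, y, y] ∈ R := by
  obtain ⟨t, ht, ⟨hE, heq⟩, hN⟩ := hR
  obtain ⟨α, hα, h0, h2⟩ :=
    exists_isGraphAuto_apply_eq (a := t 0) (b := t 2) (hE.1 ▸ nrel_ematch_iff.1 hN) hxy
  convert hinv α hα t ht using 1
  ext i : 1
  fin_cases i <;> simp [h0, h2, ← heq, hE.eq_partner, hα.apply_partner]

theorem AutoInvariant.eq_edge_mem {R : Set (Fin 4 → Vtx)} (hinv : AutoInvariant Ematch R)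
    (hR : ∃ t ∈ R, IsOP (· = ·) Ematch t ∧ NRel Ematch (t 1) (t 2)) {x y : Vtx}
    (hxy : x.1 ≠ y.1) : ![x, x, y, y.partner] ∈ R := by
  obtain ⟨t, ht, ⟨heq, hE⟩, hN⟩ := hR
  obtain ⟨α, hα, h0, h2⟩ :=
    exists_isGraphAuto_apply_eq (a := t 0) (b := t 2) (heq ▸ nrel_ematch_iff.1 hN) hxy
  convert hinv α hα t ht using 1
  ext i : 1
  fin_cases i <;> simp [h0, h2, ← heq, hE.eq_partner, hα.apply_partner]

section Pairs

variable {k : ℕ}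

theorem eEqConn_piecewise_partner (S : Finset (Fin k)) (x : Vtx) :
    EEqConn Ematch (fun _ => x) (S.piecewise (fun _ => x.partner) fun _ => x) := by
  intro i
  by_cases hi : i ∈ S
  · exact .inl (by simpa [hi] using x.ematch_partner)
  · exact .inr (by simp [hi])

theorem nECount_piecewise_partner (S : Finset (Fin k)) (x : Vtx) :
    nECount Ematch (fun _ => x) (S.piecewise (fun _ => x.partner) fun _ => x) = S.card := by
  rw [nECount, ← Set.ncard_coe_finset]
  congr 1
  ext i
  by_cases hi : i ∈ S <;> simp [hi, Ematch]

theorem EEqConn.exists_eq_piecewise {y : Vtx} {s : Fin k → Vtx}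
    (h : EEqConn Ematch (fun _ => y) s) :
    ∃ T : Finset (Fin k), s = T.piecewise (fun _ => y.partner) fun _ => y := by
  classical
  refine ⟨Finset.univ.filter fun i => Ematch y (s i), funext fun i => ?_⟩
  rcases h i with hE | heq
  · have hE : Ematch y (s i) := hE
    rw [Finset.piecewise_eq_of_mem _ _ _ (by simpa using hE), hE.eq_partner]
  · have heq : s i = y := heq.symm
    refine heq.trans (Finset.piecewise_eq_of_notMem _ _ (fun _ => y) fun hi => ?_).symm
    exact (Finset.mem_filter.1 hi).2.2 (congrArg Prod.snd heq.symm)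

end Pairs

theorem exists_mem_of_nECount_eq {k : ℕ} {f : (Fin k → Vtx) → Vtx} {R : Set (Fin 4 → Vtx)}
    (hqnu : IsQnu f) (hf : Preserves f R) (hinv : AutoInvariant Ematch R)
    (hEEq : ∃ t ∈ R, IsOP Ematch (· = ·) t ∧ NRel Ematch (t 1) (t 2))
    (hEqE : ∃ t ∈ R, IsOP (· = ·) Ematch t ∧ NRel Ematch (t 1) (t 2))
    {m : ℕ} (hmk : m ≤ k) {u s : Fin k → Vtx} (hc : EEqConn Ematch u s) (hu : IsConstTuple u)
    (hn : nECount Ematch u s = k - m ∨ nECount Ematch u s = k - m + 1) :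
    ∃ u' s', EEqConn Ematch u' s' ∧ IsConstTuple u' ∧ nECount Ematch u' s' = m ∧
      ![f u', f s', f u, f s] ∈ R := by
  obtain ⟨y, rfl⟩ : ∃ y, u = fun _ => y := hu.imp fun y hy => funext hy
  obtain ⟨T, rfl⟩ := hc.exists_eq_piecewise
  rw [nECount_piecewise_partner] at hn
  have hT : T.card ≤ k := by simpa using T.card_le_univ
  let x : Vtx := (y.1 + 1, false)
  have hxy : x.1 ≠ y.1 := by simp [x]
  have h₁ := hinv.edge_eq_mem hEEq hxy
  have h₂ := hinv.eq_edge_mem hEqE hxy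
  refine ⟨fun _ => x, ?_⟩
  rcases hn with hn | hn
  · refine ⟨_, eEqConn_piecewise_partner _ _, ⟨x, fun _ => rfl⟩, ?_, hf.piecewise_mem h₁ h₂ T⟩
    rw [nECount_piecewise_partner, Finset.card_compl, Fintype.card_fin]
    omega
  · obtain ⟨i₀, hi₀⟩ : T.Nonempty := Finset.card_pos.1 (by omega)
    have h₃ := hinv.edge_eq_mem hEEq (y := y.partner) hxy
    refine ⟨_, eEqConn_piecewise_partner _ _, ⟨x, fun _ => rfl⟩, ?_,
      hf.piecewise_insert_mem hqnu h₁ h₂ h₃ hi₀⟩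
    rw [nECount_piecewise_partner, Finset.card_insert_of_notMem (by simp [hi₀]),
      Finset.card_compl, Fintype.card_fin]
    omega

theorem stmt10_general {k : ℕ}
    (f : (Fin k → Vtx) → Vtx) (hqnu : IsQnu f)
    (hfuuE : PreservesRel f (uu Ematch))
    (R : Set (Fin 4 → Vtx)) (hRf : Preserves f R)
    (hinv : AutoInvariant Ematch R)
    (hEEq : ∃ t ∈ R, IsOP Ematch (fun a b => a = b) t ∧ NRel Ematch (t 1) (t 2))
    (hEqE : ∃ t' ∈ R, IsOP (fun a b => a = b) Ematch t' ∧ NRel Ematch (t' 1) (t' 2))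
    (m : ℕ) (hmk : m ≤ k) :
    ((∀ u s : Fin k → Vtx, EEqConn Ematch u s → IsConstTuple u →
        nECount Ematch u s = m → Ematch (f u) (f s)) →
      ((∀ u s : Fin k → Vtx, EEqConn Ematch u s → IsConstTuple u →
          (nECount Ematch u s = k - m ∨ nECount Ematch u s = k - m + 1) →
          f u = f s) ∨
       (∃ t ∈ R, IsOP Ematch Ematch t))) ∧
    ((∀ u s : Fin k → Vtx, EEqConn Ematch u s → IsConstTuple u →
        nECount Ematch u s = m → f u = f s) →
      ((∀ u s : Fin k → Vtx, EEqConn Ematch u s → IsConstTuple u →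
          (nECount Ematch u s = k - m ∨ nECount Ematch u s = k - m + 1) →
          Ematch (f u) (f s)) ∨
       (∃ t ∈ R, IsOP (fun a b : Vtx => a = b) (fun a b : Vtx => a = b) t))) := by
  refine ⟨fun hm => or_iff_not_imp_left.2 fun h => ?_,
    fun hm => or_iff_not_imp_left.2 fun h => ?_⟩
  all_goals
    push Not at h
    obtain ⟨u, s, hc, hu, hn, hfus⟩ := h
    obtain ⟨u', s', hc', hu', hn', hr⟩ :=
      exists_mem_of_nECount_eq hqnu hRf hinv hEEq hEqE hmk hc hu hn
    refine ⟨_, hr, hm u' s' hc' hu' hn', ?_⟩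
  · exact (hfuuE u s hc).resolve_right hfus
  · exact (hfuuE u s hc).resolve_left hfus

theorem stmt10 {k : ℕ}
    (f : (Fin k → Vtx) → Vtx) (hqnu : IsQnu f)
    (hfE : PreservesRel f Ematch) (hfN : PreservesRel f (NRel Ematch))
    (hfuuE : PreservesRel f (uu Ematch))
    (R : Set (Fin 4 → Vtx)) (hRf : Preserves f R)
    (hinv : AutoInvariant Ematch R)
    (hEEq : ∃ t ∈ R, IsOP Ematch (fun a b => a = b) t ∧ NRel Ematch (t 1) (t 2))
    (hEqE : ∃ t' ∈ R, IsOP (fun a b => a = b) Ematch t' ∧ NRel Ematch (t' 1) (t' 2))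
    (m : ℕ) (hm1 : 1 ≤ m) (hmk : m ≤ k) :
    ((∀ u s : Fin k → Vtx, EEqConn Ematch u s → IsConstTuple u →
        nECount Ematch u s = m → Ematch (f u) (f s)) →
      ((∀ u s : Fin k → Vtx, EEqConn Ematch u s → IsConstTuple u →
          (nECount Ematch u s = k - m ∨ nECount Ematch u s = k - m + 1) →
          f u = f s) ∨
       (∃ t ∈ R, IsOP Ematch Ematch t))) ∧
    ((∀ u s : Fin k → Vtx, EEqConn Ematch u s → IsConstTuple u →
        nECount Ematch u s = m → f u = f s) →
      ((∀ u s : Fin k → Vtx, EEqConn Ematch u s → IsConstTuple u →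
          (nECount Ematch u s = k - m ∨ nECount Ematch u s = k - m + 1) →
          Ematch (f u) (f s)) ∨
       (∃ t ∈ R, IsOP (fun a b : Vtx => a = b) (fun a b : Vtx => a = b) t))) :=
  stmt10_general f hqnu hfuuE R hRf hinv hEEq hEqE m hmk
end

section
/- Let G = (A;E) be C²_ω, the countably infinite graph that is a disjoint union of ω edges, f : A^k → A a quasi near-unanimity operation preserving E, N and uuE, and R ⊆ A⁴ a quaternary relation preserved by f, invariant under all automorphisms of G, containing an EE-tuple t and an ==-tuple t′ with N(t[2],t[3]) and N(t′[2],t′[3]). Let m ∈ {1,…,k}. If for all {E,=}-connected pairs (u,s) of k-tuples with u constant and n_E(u,s) = m we have E(f(u),f(s)), then either for all {E,=}-connected pairs (u,s) with u constant and n_E(u,s) = m−1 we have E(f(u),f(s)), or R contains an E=-tuple. -/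
universe u

variable {A : Type u}

/-- Flip the second component of a vertex. -/
def vflip (a : Vtx) : Vtx := (a.1, !a.2)

lemma ematch_vflip (a : Vtx) : Ematch a (vflip a) := by
  simp [Ematch, vflip]

lemma eq_vflip_of_ematch {a b : Vtx} (h : Ematch a b) : b = vflip a := by
  obtain ⟨h1, h2⟩ := h
  have : b.2 = !a.2 := by
    cases ha : a.2 <;> cases hb : b.2 <;> simp_all
  exact Prod.ext h1.symm this

lemma vflip_vflip (a : Vtx) : vflip (vflip a) = a := by
  simp [vflip]

/-- Core automorphism lemma: any two vertices in distinct components can be mapped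
to any two vertices in distinct components. -/
lemma exists_auto (x y p r : Vtx) (hxy : x.1 ≠ y.1) (hpr : p.1 ≠ r.1) :
    ∃ α : Vtx ≃ Vtx, IsGraphAuto Ematch α ∧ α x = p ∧ α y = r := by
  classical
  set σ : ℕ ≃ ℕ := Equiv.swap x.1 p.1 with hσ
  set π : ℕ ≃ ℕ := σ.trans (Equiv.swap (σ y.1) r.1) with hπ
  have hπx : π x.1 = p.1 := by
    have h1 : σ x.1 = p.1 := Equiv.swap_apply_left _ _
    have hne1 : p.1 ≠ σ y.1 := by
      rw [← h1]; exact fun h => hxy (σ.injective h)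
    have hne2 : p.1 ≠ r.1 := hpr
    simp [hπ, h1, Equiv.swap_apply_of_ne_of_ne hne1 hne2]
  have hπy : π y.1 = r.1 := by
    simp [hπ, Equiv.swap_apply_left]
  set ε : ℕ → Bool := fun n => if n = x.1 then xor x.2 p.2 else if n = y.1 then xor y.2 r.2 else false with hε
  have xorcancel : ∀ c b : Bool, xor c (xor c b) = b := by decide
  refine ⟨{ toFun := fun a => (π a.1, xor (ε a.1) a.2)
            invFun := fun b => (π.symm b.1, xor (ε (π.symm b.1)) b.2)
            left_inv := ?_
            right_inv := ?_ }, ?_, ?_, ?_⟩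
  · intro a
    simp [xorcancel]
  · intro b
    simp [xorcancel]
  · intro a b
    show (π a.1 = π b.1 ∧ (xor (ε a.1) a.2) ≠ (xor (ε b.1) b.2)) ↔ (a.1 = b.1 ∧ a.2 ≠ b.2)
    constructor
    · rintro ⟨h1, h2⟩
      have ha : a.1 = b.1 := π.injective h1
      exact ⟨ha, fun h => h2 (by rw [ha, h])⟩
    · rintro ⟨h1, h2⟩
      refine ⟨by rw [h1], ?_⟩
      rw [h1]
      intro h
      apply h2
      revert h
      cases ε b.1 <;> cases a.2 <;> cases b.2 <;> simp
  · show (π x.1, xor (ε x.1) x.2) = p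
    have : ε x.1 = xor x.2 p.2 := by simp [hε]
    rw [hπx, this]
    have : xor (xor x.2 p.2) x.2 = p.2 := by cases x.2 <;> cases p.2 <;> rfl
    rw [this]
  · show (π y.1, xor (ε y.1) y.2) = r
    have hyx : y.1 ≠ x.1 := fun h => hxy h.symm
    have hεy : ε y.1 = xor y.2 r.2 := by simp [hε, hyx]
    rw [hπy, hεy]
    have : xor (xor y.2 r.2) y.2 = r.2 := by cases y.2 <;> cases r.2 <;> rfl
    rw [this]
lemma auto_vflip {α : Vtx ≃ Vtx} (hα : IsGraphAuto Ematch α) (a : Vtx) :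
    α (vflip a) = vflip (α a) :=
  eq_vflip_of_ematch ((hα a (vflip a)).mpr (ematch_vflip a))

lemma ncomp_of_nrel {a b : Vtx} (h : NRel Ematch a b) : a.1 ≠ b.1 := by
  intro he
  have hb : a.2 = b.2 := by
    by_contra hb
    exact h.2 ⟨he, hb⟩
  exact h.1 (Prod.ext he hb)

lemma mem_R_EE {R : Set (Fin 4 → Vtx)} (hinv : AutoInvariant Ematch R)
    {t : Fin 4 → Vtx} (ht : t ∈ R) (hE1 : Ematch (t 0) (t 1)) (hE2 : Ematch (t 2) (t 3))
    (hN : NRel Ematch (t 1) (t 2)) (p r : Vtx) (hpr : p.1 ≠ r.1) :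
    ![p, vflip p, r, vflip r] ∈ R := by
  have h02 : (t 0).1 ≠ (t 2).1 := by
    rw [hE1.1]; exact ncomp_of_nrel hN
  obtain ⟨α, hα, hx, hy⟩ := exists_auto (t 0) (t 2) p r h02 hpr
  have h1 : α (t 1) = vflip p := by
    rw [eq_vflip_of_ematch hE1, auto_vflip hα, hx]
  have h3 : α (t 3) = vflip r := by
    rw [eq_vflip_of_ematch hE2, auto_vflip hα, hy]
  have hm := hinv α hα t ht
  have he : ![p, vflip p, r, vflip r] = fun i => α (t i) := by
    funext i; fin_cases i <;> simp [hx, h1, hy, h3]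
  rw [he]; exact hm

lemma mem_R_eqeq {R : Set (Fin 4 → Vtx)} (hinv : AutoInvariant Ematch R)
    {t : Fin 4 → Vtx} (ht : t ∈ R) (h01 : t 0 = t 1) (h23 : t 2 = t 3)
    (hN : NRel Ematch (t 1) (t 2)) (p r : Vtx) (hpr : p.1 ≠ r.1) :
    ![p, p, r, r] ∈ R := by
  obtain ⟨α, hα, hx, hy⟩ := exists_auto (t 1) (t 2) p r (ncomp_of_nrel hN) hpr
  have h0 : α (t 0) = p := by rw [h01, hx]
  have h3 : α (t 3) = r := by rw [← h23, hy]
  have hm := hinv α hα t ht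
  have he : ![p, p, r, r] = fun i => α (t i) := by
    funext i; fin_cases i <;> simp [hx, h0, hy, h3]
  rw [he]; exact hm

theorem stmt11 {k : ℕ}
    (f : (Fin k → Vtx) → Vtx) (hqnu : IsQnu f)
    (hfE : PreservesRel f Ematch) (hfN : PreservesRel f (NRel Ematch))
    (hfuuE : PreservesRel f (uu Ematch))
    (R : Set (Fin 4 → Vtx)) (hRf : Preserves f R)
    (hinv : AutoInvariant Ematch R)
    (hEE : ∃ t ∈ R, IsOP Ematch Ematch t ∧ NRel Ematch (t 1) (t 2))
    (hEqEq : ∃ t' ∈ R, IsOP (fun a b : Vtx => a = b) (fun a b : Vtx => a = b) t' ∧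
      NRel Ematch (t' 1) (t' 2))
    (m : ℕ) (hm1 : 1 ≤ m) (hmk : m ≤ k)
    (hyp : ∀ u s : Fin k → Vtx, EEqConn Ematch u s → IsConstTuple u →
      nECount Ematch u s = m → Ematch (f u) (f s)) :
    (∀ u s : Fin k → Vtx, EEqConn Ematch u s → IsConstTuple u →
      nECount Ematch u s = m - 1 → Ematch (f u) (f s)) ∨
    (∃ t ∈ R, IsOP Ematch (fun a b : Vtx => a = b) t) := by
  classical
  by_cases hfail : ∀ u s : Fin k → Vtx, EEqConn Ematch u s → IsConstTuple u →
      nECount Ematch u s = m - 1 → Ematch (f u) (f s)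
  · exact Or.inl hfail
  right
  push_neg at hfail
  obtain ⟨u, s, hconn, hconst, hcard, hnE⟩ := hfail
  obtain ⟨a0, ha0⟩ := hconst
  obtain ⟨t, ht, ⟨htE1, htE2⟩, htN⟩ := hEE
  obtain ⟨t', ht', ⟨h01, h23⟩, htN'⟩ := hEqEq
  have hus : f u = f s := by
    rcases hfuuE u s hconn with h | h
    · exact absurd h hnE
    · exact h
  have hScard : ({i : Fin k | Ematch (u i) (s i)}).ncard = m - 1 := hcard
  have hex : ∃ j : Fin k, ¬ Ematch (u j) (s j) := by
    by_contra hh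
    push_neg at hh
    have huniv : {i : Fin k | Ematch (u i) (s i)} = Set.univ := by
      ext i; simp [hh i]
    rw [huniv, Set.ncard_univ, Nat.card_eq_fintype_card, Fintype.card_fin] at hScard
    omega
  obtain ⟨j, hj⟩ := hex
  have hsj : s j = a0 := by
    rcases hconn j with h | h
    · exact absurd h hj
    · rw [← h, ha0 j]
  set z : Vtx := (a0.1 + 1, a0.2) with hz
  have hza : z.1 ≠ a0.1 := by simp [hz]
  set col1 : Fin k → Vtx := fun i => if Ematch (u i) (s i) ∨ i = j then vflip z else z
    with hcol1
  set col3 : Fin k → Vtx := Function.update (fun _ : Fin k => a0) j (vflip a0) with hcol3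
  set T : Fin k → Fin 4 → Vtx := fun i => ![z, col1 i, s i, col3 i] with hT
  have hTR : ∀ i, T i ∈ R := by
    intro i
    by_cases hEi : Ematch (u i) (s i)
    · have hij : i ≠ j := fun h => hj (h ▸ hEi)
      have hsi : s i = vflip a0 := by rw [← ha0 i]; exact eq_vflip_of_ematch hEi
      have hc1 : col1 i = vflip z := by rw [hcol1]; exact if_pos (Or.inl hEi)
      have hc3 : col3 i = a0 := by rw [hcol3]; exact Function.update_of_ne hij _ _
      have heq : T i = ![z, vflip z, vflip a0, vflip (vflip a0)] := by
        funext q; fin_cases q <;> simp [hT, hc1, hsi, hc3, vflip_vflip]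
      rw [heq]
      exact mem_R_EE hinv ht htE1 htE2 htN z (vflip a0) (by simp [vflip, hza])
    · by_cases hij : i = j
      · subst hij
        have hc1 : col1 i = vflip z := by rw [hcol1]; exact if_pos (Or.inr rfl)
        have hc3 : col3 i = vflip a0 := by rw [hcol3]; exact Function.update_self _ _ _
        have heq : T i = ![z, vflip z, a0, vflip a0] := by
          funext q; fin_cases q <;> simp [hT, hc1, hc3, hsj]
        rw [heq]
        exact mem_R_EE hinv ht htE1 htE2 htN z a0 hza
      · have hsi : s i = a0 := by
          rcases hconn i with h | h
          · exact absurd h hEi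
          · rw [← h, ha0 i]
        have hc1 : col1 i = z := by
          rw [hcol1]; exact if_neg (by simp [hEi, hij])
        have hc3 : col3 i = a0 := by rw [hcol3]; exact Function.update_of_ne hij _ _
        have heq : T i = ![z, z, a0, a0] := by
          funext q; fin_cases q <;> simp [hT, hc1, hsi, hc3]
        rw [heq]
        exact mem_R_eqeq hinv ht' h01 h23 htN' z a0 hza
  have hres := hRf T hTR
  refine ⟨_, hres, ?_, ?_⟩
  · show Ematch (f fun i => T i 0) (f fun i => T i 1)
    have e0 : (fun i => T i 0) = fun _ => z := by funext i; simp [hT]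
    have e1 : (fun i => T i 1) = col1 := by funext i; simp [hT]
    rw [e0, e1]
    apply hyp
    · intro i
      by_cases hc : Ematch (u i) (s i) ∨ i = j
      · left
        have : col1 i = vflip z := by rw [hcol1]; exact if_pos hc
        rw [this]; exact ematch_vflip z
      · right
        have : col1 i = z := by rw [hcol1]; exact if_neg hc
        rw [this]
    · exact ⟨z, fun _ => rfl⟩
    · show ({i : Fin k | Ematch ((fun _ => z) i) (col1 i)}).ncard = m
      have hset : {i : Fin k | Ematch ((fun _ => z) i) (col1 i)}
          = insert j {i : Fin k | Ematch (u i) (s i)} := by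
        ext i
        simp only [Set.mem_setOf_eq, Set.mem_insert_iff]
        by_cases hc : Ematch (u i) (s i) ∨ i = j
        · have : col1 i = vflip z := by rw [hcol1]; exact if_pos hc
          rw [this]
          simp only [ematch_vflip z, true_iff]
          tauto
        · have : col1 i = z := by rw [hcol1]; exact if_neg hc
          rw [this]
          have : ¬ Ematch z z := by simp [Ematch]
          simp only [this, false_iff]
          tauto
      have hj' : j ∉ {i : Fin k | Ematch (u i) (s i)} := hj
      rw [hset, Set.ncard_insert_of_notMem hj' (Set.toFinite _), hScard]
      omega
  · show f (fun i => T i 2) = f (fun i => T i 3)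
    have e2 : (fun i => T i 2) = s := by funext i; simp [hT]
    have e3 : (fun i => T i 3) = col3 := by funext i; simp [hT]
    rw [e2, e3]
    have hcq : f col3 = f (fun _ => a0) := by rw [hcol3]; exact hqnu a0 (vflip a0) j
    have hu : u = fun _ => a0 := funext ha0
    rw [hcq, ← hus, hu]
end

section
/- Let G = (A;E) be C²_ω, the countably infinite graph that is a disjoint union of ω edges, let h : A³ → A be an operation such that (i) N(h(a),h(b)) whenever N(a[i],b[i]) for some i, and (ii) whenever (a[i],b[i]) ∈ E ∪ = for all i, E(h(a),h(b)) iff the number of coordinates with E(a[i],b[i]) is odd, and let f : A^k → A be a quasi near-unanimity operation preserving E, N and uuE. If a quaternary relation R ⊆ A⁴ is preserved by both h and f, is invariant under all automorphisms of G, and contains an E=-tuple t and an =E-tuple t′ with N(t[2],t[3]) and N(t′[2],t′[3]), then R contains an EE-tuple and an ==-tuple. -/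
universe u

variable {A : Type u}

/-! ### Auxiliary machinery -/

/-- The unique neighbour of a vertex of `C²_ω`. -/
def oppV (v : Vtx) : Vtx := (v.1, !v.2)

lemma oppV_oppV (v : Vtx) : oppV (oppV v) = v := by simp [oppV]

lemma ematch_oppV (v : Vtx) : Ematch v (oppV v) := ⟨rfl, by simp [oppV]⟩

lemma ematch_irrefl (v : Vtx) : ¬ Ematch v v := fun h => h.2 rfl

lemma ematch_symm {u v : Vtx} (h : Ematch u v) : Ematch v u :=
  ⟨h.1.symm, fun e => h.2 e.symm⟩

lemma eq_oppV_of_ematch {u v : Vtx} (h : Ematch u v) : v = oppV u := by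
  obtain ⟨u1, u2⟩ := u; obtain ⟨v1, v2⟩ := v
  obtain ⟨h1, h2⟩ := h
  simp only [oppV] at *
  subst h1
  cases u2 <;> cases v2 <;> simp_all

/-- Build an automorphism of `C²_ω` from a permutation of the edges and a family of flips. -/
def mkAuto (π : ℕ ≃ ℕ) (ε : ℕ → Bool) : Vtx ≃ Vtx where
  toFun v := (π v.1, xor v.2 (ε v.1))
  invFun v := (π.symm v.1, xor v.2 (ε (π.symm v.1)))
  left_inv v := by cases v with | mk n b => simp [Bool.xor_assoc]
  right_inv v := by cases v with | mk n b => simp [Bool.xor_assoc]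

lemma mkAuto_isAuto (π : ℕ ≃ ℕ) (ε : ℕ → Bool) : IsGraphAuto Ematch (mkAuto π ε) := by
  intro a b
  obtain ⟨a1, a2⟩ := a; obtain ⟨b1, b2⟩ := b
  simp only [mkAuto, Ematch, Equiv.coe_fn_mk]
  constructor
  · rintro ⟨h1, h2⟩
    have h1' : a1 = b1 := π.injective h1
    subst h1'
    exact ⟨rfl, fun e => h2 (by rw [e])⟩
  · rintro ⟨h1, h2⟩
    subst h1
    refine ⟨rfl, ?_⟩
    cases a2 <;> cases b2 <;> simp_all

lemma exists_nat_equiv (a b x y : ℕ) (hab : a ≠ b) (hxy : x ≠ y) :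
    ∃ π : ℕ ≃ ℕ, π a = x ∧ π b = y := by
  classical
  refine ⟨(Equiv.swap a x).trans (Equiv.swap ((Equiv.swap a x) b) y), ?_, ?_⟩
  · simp only [Equiv.trans_apply, Equiv.swap_apply_left]
    have h1 : Equiv.swap a x b ≠ x := by
      by_cases hbx : b = x
      · subst hbx
        rw [Equiv.swap_apply_right]
        exact fun h => hab h
      · rw [Equiv.swap_apply_of_ne_of_ne (Ne.symm hab) hbx]
        exact hbx
    exact Equiv.swap_apply_of_ne_of_ne (Ne.symm h1) hxy
  · simp only [Equiv.trans_apply, Equiv.swap_apply_left]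

lemma exists_vtx_auto (p q x z : Vtx) (hpq : p.1 ≠ q.1) (hxz : x.1 ≠ z.1) :
    ∃ α : Vtx ≃ Vtx, IsGraphAuto Ematch α ∧ α p = x ∧ α q = z := by
  classical
  obtain ⟨π, hπ1, hπ2⟩ := exists_nat_equiv p.1 q.1 x.1 z.1 hpq hxz
  refine ⟨mkAuto π (fun n => if n = p.1 then xor p.2 x.2
      else if n = q.1 then xor q.2 z.2 else false), mkAuto_isAuto _ _, ?_, ?_⟩
  · show (π p.1, xor p.2 _) = x
    refine Prod.ext hπ1 ?_
    simp only [if_pos rfl]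
    cases p.2 <;> cases x.2 <;> rfl
  · show (π q.1, xor q.2 _) = z
    refine Prod.ext hπ2 ?_
    simp only [if_neg (fun hcon : q.1 = p.1 => hpq hcon.symm), if_pos rfl]
    cases q.2 <;> cases z.2 <;> rfl

lemma auto_oppV {α : Vtx ≃ Vtx} (hα : IsGraphAuto Ematch α) (v : Vtx) :
    α (oppV v) = oppV (α v) :=
  eq_oppV_of_ematch ((hα v (oppV v)).mpr (ematch_oppV v))

/-- Fixed base vertices. -/
def vX : Vtx := ((0 : ℕ), false)
def vY : Vtx := ((0 : ℕ), true)

lemma oppV_vX : oppV vX = vY := rfl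
lemma oppV_vY : oppV vY = vX := rfl

theorem stmt12 {k : ℕ} (h : Vtx → Vtx → Vtx → Vtx) (hh : HMinority Ematch h)
    (f : (Fin k → Vtx) → Vtx) (hqnu : IsQnu f)
    (hfE : PreservesRel f Ematch) (hfN : PreservesRel f (NRel Ematch))
    (hfuuE : PreservesRel f (uu Ematch))
    (R : Set (Fin 4 → Vtx)) (hRh : Preserves3 h R) (hRf : Preserves f R)
    (hinv : AutoInvariant Ematch R)
    (hEEq : ∃ t ∈ R, IsOP Ematch (fun a b => a = b) t ∧ NRel Ematch (t 1) (t 2))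
    (hEqE : ∃ t' ∈ R, IsOP (fun a b => a = b) Ematch t' ∧ NRel Ematch (t' 1) (t' 2)) :
    (∃ t ∈ R, IsOP Ematch Ematch t) ∧
    (∃ t ∈ R, IsOP (fun a b : Vtx => a = b) (fun a b : Vtx => a = b) t) := by
  classical
  obtain ⟨t, htR, ⟨htE, htEq⟩, htN⟩ := hEEq
  obtain ⟨t', ht'R, ⟨ht'Eq, ht'E⟩, ht'N⟩ := hEqE
  have ht1 : t 1 = oppV (t 0) := eq_oppV_of_ematch htE
  have ht'3 : t' 3 = oppV (t' 2) := eq_oppV_of_ematch ht'E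
  have htne : (t 0).1 ≠ (t 2).1 := by
    intro hcon
    rcases htN with ⟨hne, hnE⟩
    by_cases h2 : (t 0).2 = (t 2).2
    · refine hnE ?_
      rw [show t 2 = t 0 from Prod.ext hcon.symm h2.symm]
      exact ematch_symm htE
    · refine hne ?_
      rw [ht1]
      refine Prod.ext hcon ?_
      simp only [oppV]
      cases hb : (t 0).2 <;> cases hb2 : (t 2).2 <;> simp_all
  have htne' : (t' 0).1 ≠ (t' 2).1 := by
    intro hcon
    rcases ht'N with ⟨hne, hnE⟩
    have hcon1 : (t' 1).1 = (t' 2).1 := by rw [← ht'Eq]; exact hcon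
    by_cases h2 : (t' 1).2 = (t' 2).2
    · exact hne (Prod.ext hcon1 h2)
    · exact hnE ⟨hcon1, h2⟩
  -- moving the two given tuples around by automorphisms
  have moveT : ∀ x q : Vtx, x.1 ≠ q.1 → (![x, oppV x, q, q] : Fin 4 → Vtx) ∈ R := by
    intro x q hxq
    obtain ⟨α, hα, h0, h2⟩ := exists_vtx_auto (t 0) (t 2) x q htne hxq
    have hmem := hinv α hα t htR
    have heq : (fun i => α (t i)) = ![x, oppV x, q, q] := by
      funext i
      fin_cases i
      · exact h0
      · show α (t 1) = oppV x
        rw [ht1, auto_oppV hα, h0]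
      · exact h2
      · show α (t 3) = q
        rw [← htEq, h2]
    rwa [heq] at hmem
  have moveT' : ∀ q x : Vtx, q.1 ≠ x.1 → (![q, q, x, oppV x] : Fin 4 → Vtx) ∈ R := by
    intro q x hqx
    obtain ⟨α, hα, h0, h2⟩ := exists_vtx_auto (t' 0) (t' 2) q x htne' hqx
    have hmem := hinv α hα t' ht'R
    have heq : (fun i => α (t' i)) = ![q, q, x, oppV x] := by
      funext i
      fin_cases i
      · exact h0
      · show α (t' 1) = q
        rw [← ht'Eq, h0]
      · exact h2
      · show α (t' 3) = oppV x
        rw [ht'3, auto_oppV hα, h2]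
    rwa [heq] at hmem
  -- the crucial step: R contains a tuple with both pairs equal
  have hu : ∃ u ∈ R, u 0 = u 1 ∧ u 2 = u 3 := by
    rcases Nat.lt_or_ge k 2 with hk | hk
    · interval_cases k
      · -- k = 0 : f is a constant
        have hmem := hRf Fin.elim0 (fun i => i.elim0)
        exact ⟨_, hmem, congrArg f (funext fun i => i.elim0),
          congrArg f (funext fun i => i.elim0)⟩
      · -- k = 1 : f is a constant by qnu
        have hconst2 : ∀ x y : Vtx, f (fun _ => y) = f (fun _ => x) := by
          intro x y
          have h1 : (Function.update (fun _ : Fin 1 => x) 0 y) = (fun _ => y) := by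
            funext m
            have hm : m = 0 := Subsingleton.elim m 0
            subst hm; simp
          have := hqnu x y 0
          rwa [h1] at this
        have hconst : ∀ v w : Fin 1 → Vtx, f v = f w := by
          intro v w
          have hv : v = fun _ => v 0 := funext fun m => by rw [Subsingleton.elim m 0]
          have hw : w = fun _ => w 0 := funext fun m => by rw [Subsingleton.elim m 0]
          rw [hv, hw, hconst2 (w 0) (v 0)]
        have hmem := hRf (fun _ => t) (fun _ => htR)
        exact ⟨_, hmem, hconst _ _, hconst _ _⟩
    · -- k ≥ 2
      by_contra hno
      push_neg at hno
      set G : (Fin k → Bool) → Vtx := fun β => f (fun m => ((1:ℕ), β m)) with hGdef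
      have hGuu : ∀ β β' : Fin k → Bool, uu Ematch (G β) (G β') := by
        intro β β'
        apply hfuuE
        intro m
        by_cases hb : β m = β' m
        · exact Or.inr (by rw [hb])
        · exact Or.inl ⟨rfl, hb⟩
      have hGE : Ematch (G (fun _ => false)) (G (fun _ => true)) :=
        hfE _ _ (fun m => ⟨rfl, by simp⟩)
      -- the key construction using two t-type tuples and (k-2) t'-type tuples
      have hA : ∀ i l : Fin k, i ≠ l → ∀ β : Fin k → Bool,
          Ematch (G β) (G (fun m => if m = i ∨ m = l then β m else !β m)) := by
        intro i l hil β
        set β' : Fin k → Bool := fun m => if m = i ∨ m = l then β m else !β m with hβ'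
        set U : Fin k → (Fin 4 → Vtx) := fun m =>
          if m = i then ![vY, vX, ((1:ℕ), β m), ((1:ℕ), β m)]
          else if m = l then ![vX, vY, ((1:ℕ), β m), ((1:ℕ), β m)]
          else ![vX, vX, ((1:ℕ), β m), ((1:ℕ), !β m)] with hU
        have hUR : ∀ m, U m ∈ R := by
          intro m
          rw [hU]
          dsimp only
          split_ifs with h1 h2
          · have := moveT vY ((1:ℕ), β m) (by simp [vY])
            rwa [oppV_vY] at this
          · have := moveT vX ((1:ℕ), β m) (by simp [vX])
            rwa [oppV_vX] at this
          · have := moveT' vX ((1:ℕ), β m) (by simp [vX])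
            have hop : oppV ((1:ℕ), β m) = ((1:ℕ), !β m) := rfl
            rwa [hop] at this
        have hr := hRf U hUR
        set r : Fin 4 → Vtx := fun j => f (fun m => U m j) with hrdef
        have hr0 : r 0 = f (fun _ => vX) := by
          have he : (fun m => U m 0) = Function.update (fun _ => vX) i vY := by
            funext m
            rw [Function.update_apply, hU]
            by_cases h1 : m = i
            · simp [h1]
            · by_cases h2 : m = l <;> simp [h1, h2, hil, Ne.symm hil]
          show f (fun m => U m 0) = _
          rw [he, hqnu vX vY i]
        have hr1 : r 1 = f (fun _ => vX) := by
          have he : (fun m => U m 1) = Function.update (fun _ => vX) l vY := by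
            funext m
            rw [Function.update_apply, hU]
            by_cases h1 : m = i
            · have h2 : m ≠ l := fun hc => hil (h1 ▸ hc)
              simp [h1, h2, hil, Ne.symm hil]
            · by_cases h2 : m = l <;> simp [h1, h2, hil, Ne.symm hil]
          show f (fun m => U m 1) = _
          rw [he, hqnu vX vY l]
        have hr2 : r 2 = G β := by
          have he : (fun m => U m 2) = fun m => ((1:ℕ), β m) := by
            funext m
            rw [hU]
            by_cases h1 : m = i
            · simp [h1]
            · by_cases h2 : m = l <;> simp [h1, h2, hil, Ne.symm hil]
          show f (fun m => U m 2) = _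
          rw [he, hGdef]
        have hr3 : r 3 = G β' := by
          have he : (fun m => U m 3) = fun m => ((1:ℕ), β' m) := by
            funext m
            rw [hU, hβ']
            by_cases h1 : m = i
            · simp [h1]
            · by_cases h2 : m = l <;> simp [h1, h2, hil, Ne.symm hil]
          show f (fun m => U m 3) = _
          rw [he, hGdef]
        rcases hGuu β β' with hEm | hEq
        · exact hEm
        · exact absurd (by rw [← hr2, ← hr3] at hEq; exact hEq)
            (hno r hr (hr0.trans hr1.symm))
      -- derive a contradiction
      rcases Nat.lt_or_ge k 3 with hk3 | hk3
      · -- k = 2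
        have hk2 : k = 2 := by omega
        subst hk2
        have h01 : ((0 : Fin 2)) ≠ 1 := by decide
        have hthis := hA 0 1 h01 (fun _ => false)
        refine ematch_irrefl (G (fun _ => false)) ?_
        convert hthis using 3
        rename_i m
        fin_cases m <;> simp
      · -- k ≥ 3
        have star : ∀ i j : Fin k, i ≠ j → ∀ β : Fin k → Bool,
            G (fun m => if m = i ∨ m = j then !β m else β m) = G β := by
          intro i j hij β
          have hl : ∃ l : Fin k, l ≠ i ∧ l ≠ j := by
            by_contra hcon
            push_neg at hcon
            have hsub : (Finset.univ : Finset (Fin k)) ⊆ {i, j} := by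
              intro m _
              simp only [Finset.mem_insert, Finset.mem_singleton]
              by_cases hmi : m = i
              · exact Or.inl hmi
              · exact Or.inr (hcon m hmi)
            have h2 : ({i, j} : Finset (Fin k)).card ≤ 2 := by
              refine le_trans (Finset.card_insert_le _ _) ?_
              simp
            have h3 : k ≤ 2 := by
              calc k = (Finset.univ : Finset (Fin k)).card := by simp
                _ ≤ ({i, j} : Finset (Fin k)).card := Finset.card_le_card hsub
                _ ≤ 2 := h2
            omega
          obtain ⟨l, hli, hlj⟩ := hl
          have e1 := hA i l (Ne.symm hli) β
          set γ : Fin k → Bool := fun m => if m = i ∨ m = l then β m else !β m with hγ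
          have e2 := hA j l (Ne.symm hlj) γ
          have e3 : (fun m => if m = j ∨ m = l then γ m else !γ m)
              = (fun m => if m = i ∨ m = j then !β m else β m) := by
            funext m
            rw [hγ]
            by_cases hmi : m = i
            · subst hmi
              simp [hij, Ne.symm hli]
            · by_cases hmj : m = j
              · subst hmj
                simp [Ne.symm hij, Ne.symm hlj, hmi]
              · by_cases hml : m = l
                · subst hml
                  simp [hli, hlj]
                · simp [hmi, hmj, hml]
          have e4 := eq_oppV_of_ematch e1
          have e5 := eq_oppV_of_ematch e2
          rw [e3] at e5
          rw [e5, e4, oppV_oppV]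
        have key : ∀ n : ℕ, ∀ β : Fin k → Bool,
            (Finset.univ.filter (fun m => β m = true)).card ≤ n →
            G β = G (fun _ => false) := by
          intro n
          induction n with
          | zero =>
            intro β hc
            have h0 : β = fun _ => false := by
              funext m
              by_contra hb
              have hm : m ∈ Finset.univ.filter (fun m => β m = true) := by
                simp only [Finset.mem_filter, Finset.mem_univ, true_and]
                cases hbm : β m
                · exact absurd hbm hb
                · rfl
              have := Finset.card_pos.mpr ⟨m, hm⟩
              omega
            rw [h0]
          | succ n ih =>
            intro β hc
            by_cases h1 : (Finset.univ.filter (fun m => β m = true)).card ≤ 1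
            · rcases Nat.le_one_iff_eq_zero_or_eq_one.mp h1 with h0 | h0
              · have hβ0 : β = fun _ => false := by
                  funext m
                  by_contra hb
                  have hm : m ∈ Finset.univ.filter (fun m => β m = true) := by
                    simp only [Finset.mem_filter, Finset.mem_univ, true_and]
                    cases hbm : β m
                    · exact absurd hbm hb
                    · rfl
                  have := Finset.card_pos.mpr ⟨m, hm⟩
                  omega
                rw [hβ0]
              · obtain ⟨i, hi⟩ := Finset.card_eq_one.mp h0
                have hβi : β i = true := by
                  have : i ∈ Finset.univ.filter (fun m => β m = true) := by
                    rw [hi]; exact Finset.mem_singleton_self i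
                  exact (Finset.mem_filter.mp this).2
                have he : (fun m => ((1:ℕ), β m))
                    = Function.update (fun _ : Fin k => ((1:ℕ), false)) i ((1:ℕ), true) := by
                  funext m
                  rw [Function.update_apply]
                  by_cases hmi : m = i
                  · subst hmi
                    simp [hβi]
                  · have hβm : β m = false := by
                      cases hbm : β m
                      · rfl
                      · exfalso
                        have : m ∈ Finset.univ.filter (fun m => β m = true) := by
                          simp only [Finset.mem_filter, Finset.mem_univ, true_and]
                          exact hbm
                        rw [hi, Finset.mem_singleton] at this
                        exact hmi this
                    simp [hmi, hβm]
                show f (fun m => ((1:ℕ), β m)) = _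
                rw [he, hqnu ((1:ℕ), false) ((1:ℕ), true) i]
            · push_neg at h1
              obtain ⟨i, hi, j, hj, hij⟩ := Finset.one_lt_card.mp h1
              have hbi : β i = true := (Finset.mem_filter.mp hi).2
              have hbj : β j = true := (Finset.mem_filter.mp hj).2
              set β' : Fin k → Bool := fun m => if m = i ∨ m = j then !β m else β m with hβ'
              have hstar := star i j hij β
              have hfilter : Finset.univ.filter (fun m => β' m = true)
                  = (Finset.univ.filter (fun m => β m = true)) \ {i, j} := by
                ext m
                simp only [hβ', Finset.mem_filter, Finset.mem_sdiff, Finset.mem_insert,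
                  Finset.mem_singleton, Finset.mem_univ, true_and]
                by_cases hmi : m = i
                · subst hmi
                  simp [hbi]
                · by_cases hmj : m = j
                  · subst hmj
                    simp [hbj, hmi]
                  · simp [hmi, hmj]
              have hsub2 : ({i, j} : Finset (Fin k)) ⊆
                  Finset.univ.filter (fun m => β m = true) := by
                rw [Finset.insert_subset_iff, Finset.singleton_subset_iff]
                exact ⟨hi, hj⟩
              have hcard' : (Finset.univ.filter (fun m => β' m = true)).card ≤ n := by
                rw [hfilter, Finset.card_sdiff_of_subset hsub2]
                have hc2 : ({i, j} : Finset (Fin k)).card = 2 := by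
                  rw [Finset.card_insert_of_notMem (by simp [hij]), Finset.card_singleton]
                rw [hc2]
                omega
              rw [← hstar]
              exact ih β' hcard'
        have hall := key k (fun _ => true)
          (le_trans (Finset.card_filter_le _ _) (by simp))
        rw [hall] at hGE
        exact ematch_irrefl _ hGE
  -- conclude
  obtain ⟨u, huR, hu01, hu23⟩ := hu
  refine ⟨⟨fun j => h (t j) (t' j) (u j), hRh t t' u htR ht'R huR, ?_, ?_⟩,
    ⟨u, huR, hu01, hu23⟩⟩
  · exact (hh.2 (t 0) (t' 0) (u 0) (t 1) (t' 1) (u 1)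
      (Or.inl htE) (Or.inr ht'Eq) (Or.inr hu01)).mpr
      (Or.inr (Or.inl ⟨htE, (by rw [ht'Eq]; exact ematch_irrefl _),
        (by rw [hu01]; exact ematch_irrefl _)⟩))
  · exact (hh.2 (t 2) (t' 2) (u 2) (t 3) (t' 3) (u 3)
      (Or.inr htEq) (Or.inl ht'E) (Or.inr hu23)).mpr
      (Or.inr (Or.inr (Or.inl ⟨(by rw [htEq]; exact ematch_irrefl _), ht'E,
        (by rw [hu23]; exact ematch_irrefl _)⟩)))
end

section
/- Let G = (A;E) be a simple graph, let {O₁,O₂} = {E,N}, and let f : A² → A be a binary injection such that either O₁ = E and f is of behaviour max and balanced, or of behaviour max and E-dominated, or E-constant; or O₁ = N and f is of behaviour min and balanced, or of behaviour min and N-dominated, or N-constant. Then no quaternary relation R ⊆ A⁴ preserved by f efficiently entails (O₁(x₁,x₂) → uuO₂(x₃,x₄)). -/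
universe u

variable {A : Type u}

/-- The case hypothesis on the binary injection `f` from Lemma
`graphreductbinary`: either `O₁ = E` and `f` is of behaviour max and balanced,
or of behaviour max and `E`-dominated, or `E`-constant; or `O₁ = N` and `f` is
of behaviour min and balanced, or of behaviour min and `N`-dominated, or
`N`-constant. -/
def BinCase (E : A → A → Prop) (O₁ O₂ : A → A → Prop) (f : A → A → A) : Prop :=
  (O₁ = E ∧ O₂ = NRel E ∧
    ((BehMax E f ∧ BalancedBin E f) ∨ (BehMax E f ∧ EDominated E f) ∨ EConstantBin E f)) ∨
  (O₁ = NRel E ∧ O₂ = E ∧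
    ((BehMin E f ∧ BalancedBin E f) ∨ (BehMin E f ∧ NDominated E f) ∨ NConstantBin E f))

theorem stmt14 (E : A → A → Prop) (hG : IsSimpleGraph E)
    (O₁ O₂ : A → A → Prop) (f : A → A → A) (hfinj : BinInj f)
    (hcase : BinCase E O₁ O₂ f) :
    ∀ R : Set (Fin 4 → A), Preserves2 f R → ¬ EffEntails R O₁ (uu O₂) := by
  obtain ⟨hsymm, hirr⟩ := hG
  rintro R hpres ⟨hent, ⟨t₁, ht₁, h1a, h1b⟩, ⟨t₂, ht₂, h2a, h2b⟩⟩
  have hs : (fun j => f (t₁ j) (t₂ j)) ∈ R := hpres t₁ t₂ ht₁ ht₂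
  have finj : ∀ a b c d : A, f a b = f c d → a = c ∧ b = d := by
    intro a b c d h
    have h2 : ((a, b) : A × A) = (c, d) := hfinj h
    exact ⟨congrArg Prod.fst h2, congrArg Prod.snd h2⟩
  have Ene : ∀ a b, E a b → a ≠ b := fun a b h heq => hirr b (heq ▸ h)
  rcases hcase with ⟨hO1E, hO2N, hf⟩ | ⟨hO1N, hO2E, hf⟩
  · rw [hO1E] at h1a h2a hent
    rw [hO2N] at h1b h2b hent
    have hne01 : t₁ 0 ≠ t₁ 1 := Ene _ _ h1a
    have h2b' : E (t₂ 2) (t₂ 3) := by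
      by_contra hE
      by_cases h : t₂ 2 = t₂ 3
      · exact h2b (Or.inr h)
      · exact h2b (Or.inl ⟨h, hE⟩)
    have hne23' : t₂ 2 ≠ t₂ 3 := Ene _ _ h2b'
    have hfn01 : f (t₁ 0) (t₂ 0) ≠ f (t₁ 1) (t₂ 1) :=
      fun he => hne01 (finj _ _ _ _ he).1
    have hfn23 : f (t₁ 2) (t₂ 2) ≠ f (t₁ 3) (t₂ 3) :=
      fun he => hne23' (finj _ _ _ _ he).2
    have key1 : E (f (t₁ 0) (t₂ 0)) (f (t₁ 1) (t₂ 1)) := by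
      rcases hf with ⟨hmax, hbal⟩ | ⟨hmax, hdom⟩ | hcon
      · by_cases h : t₂ 0 = t₂ 1
        · exact (hbal (t₁ 0) (t₂ 0) (t₁ 1) (t₂ 1)).1 (Or.inl ⟨h1a, h⟩)
        · by_contra hE
          exact ((hmax _ _ _ _ hne01 h).mp ⟨hfn01, hE⟩).1.2 h1a
      · by_cases h : t₂ 0 = t₂ 1
        · exact hdom _ _ _ _ (Or.inr ⟨hne01, h⟩)
        · by_contra hE
          exact ((hmax _ _ _ _ hne01 h).mp ⟨hfn01, hE⟩).1.2 h1a
      · exact hcon _ _ _ _ hfn01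
    have key2 : E (f (t₁ 2) (t₂ 2)) (f (t₁ 3) (t₂ 3)) := by
      rcases hf with ⟨hmax, hbal⟩ | ⟨hmax, hdom⟩ | hcon
      · rcases h1b with ⟨hne, _⟩ | heq
        · by_contra hE
          exact ((hmax _ _ _ _ hne hne23').mp ⟨hfn23, hE⟩).2.2 h2b'
        · exact (hbal (t₁ 2) (t₂ 2) (t₁ 3) (t₂ 3)).1 (Or.inr ⟨heq, h2b'⟩)
      · rcases h1b with ⟨hne, _⟩ | heq
        · by_contra hE
          exact ((hmax _ _ _ _ hne hne23').mp ⟨hfn23, hE⟩).2.2 h2b'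
        · exact hdom _ _ _ _ (Or.inl ⟨heq, hne23'⟩)
      · exact hcon _ _ _ _ hfn23
    have := hent _ hs key1
    rcases this with ⟨_, hnE⟩ | heq
    · exact hnE key2
    · exact Ene _ _ key2 heq
  · rw [hO1N] at h1a h2a hent
    rw [hO2E] at h1b h2b hent
    obtain ⟨hne01, hnE01⟩ := h1a
    have h2b' : NRel E (t₂ 2) (t₂ 3) := by
      constructor
      · intro heq; exact h2b (Or.inr heq)
      · intro hE; exact h2b (Or.inl hE)
    obtain ⟨hne23', hnE23'⟩ := h2b'
    have hfn01 : f (t₁ 0) (t₂ 0) ≠ f (t₁ 1) (t₂ 1) :=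
      fun he => hne01 (finj _ _ _ _ he).1
    have hfn23 : f (t₁ 2) (t₂ 2) ≠ f (t₁ 3) (t₂ 3) :=
      fun he => hne23' (finj _ _ _ _ he).2
    have key1 : NRel E (f (t₁ 0) (t₂ 0)) (f (t₁ 1) (t₂ 1)) := by
      rcases hf with ⟨hmin, hbal⟩ | ⟨hmin, hdom⟩ | hcon
      · by_cases h : t₂ 0 = t₂ 1
        · exact (hbal (t₁ 0) (t₂ 0) (t₁ 1) (t₂ 1)).2 (Or.inl ⟨⟨hne01, hnE01⟩, h⟩)
        · exact ⟨hfn01, fun hE => hnE01 ((hmin _ _ _ _ hne01 h).mp hE).1⟩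
      · by_cases h : t₂ 0 = t₂ 1
        · exact hdom _ _ _ _ (Or.inr ⟨hne01, h⟩)
        · exact ⟨hfn01, fun hE => hnE01 ((hmin _ _ _ _ hne01 h).mp hE).1⟩
      · exact hcon _ _ _ _ hfn01
    have key2 : NRel E (f (t₁ 2) (t₂ 2)) (f (t₁ 3) (t₂ 3)) := by
      rcases hf with ⟨hmin, hbal⟩ | ⟨hmin, hdom⟩ | hcon
      · rcases h1b with hE | heq
        · exact ⟨hfn23, fun hEf => hnE23' ((hmin _ _ _ _ (Ene _ _ hE) hne23').mp hEf).2⟩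
        · exact (hbal (t₁ 2) (t₂ 2) (t₁ 3) (t₂ 3)).2 (Or.inr ⟨heq, hne23', hnE23'⟩)
      · rcases h1b with hE | heq
        · exact ⟨hfn23, fun hEf => hnE23' ((hmin _ _ _ _ (Ene _ _ hE) hne23').mp hEf).2⟩
        · exact hdom _ _ _ _ (Or.inl ⟨heq, hne23'⟩)
      · exact hcon _ _ _ _ hfn23
    have := hent _ hs key1
    rcases this with hE | heq
    · exact key2.2 hE
    · exact key2.1 heq
end

section
/- Let G = (A;E) be a simple graph, let {O₁,O₂} = {E,N}, and let f : A² → A be a binary injection such that either O₁ = E and f is of behaviour max and balanced, or of behaviour max and E-dominated, or E-constant; or O₁ = N and f is of behaviour min and balanced, or of behaviour min and N-dominated, or N-constant. Then no quaternary relation R ⊆ A⁴ preserved by f efficiently entails (O₁(x₁,x₂) → x₃ = x₄). -/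
universe u

variable {A : Type u}

theorem stmt15 (E : A → A → Prop) (hG : IsSimpleGraph E)
    (O₁ O₂ : A → A → Prop) (f : A → A → A) (hfinj : BinInj f)
    (hcase : BinCase E O₁ O₂ f) :
    ∀ R : Set (Fin 4 → A), Preserves2 f R →
      ¬ EffEntails R O₁ (fun a b => a = b) := by
  rintro R hpres ⟨h1, ⟨t₁, ht₁R, ht₁O, ht₁eq⟩, ⟨t₂, ht₂R, ht₂O, ht₂ne⟩⟩
  have hinj : ∀ a₁ a₂ b₁ b₂ : A, (a₁ ≠ b₁ ∨ a₂ ≠ b₂) → f a₁ a₂ ≠ f b₁ b₂ := by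
    intro a₁ a₂ b₁ b₂ h heq
    have := hfinj (show (fun p : A × A => f p.1 p.2) (a₁, a₂) =
      (fun p : A × A => f p.1 p.2) (b₁, b₂) from heq)
    cases h with
    | inl h => exact h (congrArg Prod.fst this)
    | inr h => exact h (congrArg Prod.snd this)
  have htR := hpres t₁ t₂ ht₁R ht₂R
  have h23 : f (t₁ 2) (t₂ 2) ≠ f (t₁ 3) (t₂ 3) := by
    rw [ht₁eq]; exact hinj _ _ _ _ (Or.inr ht₂ne)
  have hO : O₁ (f (t₁ 0) (t₂ 0)) (f (t₁ 1) (t₂ 1)) := by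
    rcases hcase with ⟨hE, _, hc⟩ | ⟨hNe, _, hc⟩
    · subst hE
      have hne1 : t₁ 0 ≠ t₁ 1 := fun h => hG.2 _ (h ▸ ht₁O)
      have hfne : f (t₁ 0) (t₂ 0) ≠ f (t₁ 1) (t₂ 1) := hinj _ _ _ _ (Or.inl hne1)
      rcases hc with ⟨hmax, hbal⟩ | ⟨hmax, hdom⟩ | hconst
      · by_cases h2 : t₂ 0 = t₂ 1
        · exact ((hbal _ _ _ _).1) (Or.inl ⟨ht₁O, h2⟩)
        · by_contra hnE
          exact ((hmax (t₁ 0) (t₂ 0) (t₁ 1) (t₂ 1) hne1 h2).mp ⟨hfne, hnE⟩).1.2 ht₁O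
      · by_cases h2 : t₂ 0 = t₂ 1
        · exact hdom _ _ _ _ (Or.inr ⟨hne1, h2⟩)
        · by_contra hnE
          exact ((hmax (t₁ 0) (t₂ 0) (t₁ 1) (t₂ 1) hne1 h2).mp ⟨hfne, hnE⟩).1.2 ht₁O
      · exact hconst _ _ _ _ hfne
    · subst hNe
      have hne1 : t₁ 0 ≠ t₁ 1 := ht₁O.1
      have hfne : f (t₁ 0) (t₂ 0) ≠ f (t₁ 1) (t₂ 1) := hinj _ _ _ _ (Or.inl hne1)
      rcases hc with ⟨hmin, hbal⟩ | ⟨hmin, hdom⟩ | hconst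
      · by_cases h2 : t₂ 0 = t₂ 1
        · exact ((hbal _ _ _ _).2) (Or.inl ⟨ht₁O, h2⟩)
        · exact ⟨hfne, fun hEf =>
            ht₁O.2 ((hmin (t₁ 0) (t₂ 0) (t₁ 1) (t₂ 1) hne1 h2).mp hEf).1⟩
      · by_cases h2 : t₂ 0 = t₂ 1
        · exact hdom _ _ _ _ (Or.inr ⟨hne1, h2⟩)
        · exact ⟨hfne, fun hEf =>
            ht₁O.2 ((hmin (t₁ 0) (t₂ 0) (t₁ 1) (t₂ 1) hne1 h2).mp hEf).1⟩
      · exact hconst _ _ _ _ hfne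
  exact h23 (h1 _ htR hO)
end

section
/- Let G = (A;E) be a simple graph, let {O₁,O₂} = {E,N}, and let f : A² → A be a binary injection such that either O₁ = E and f is of behaviour max and balanced, or of behaviour max and E-dominated, or E-constant; or O₁ = N and f is of behaviour min and balanced, or of behaviour min and N-dominated, or N-constant. Then no quaternary relation R ⊆ A⁴ preserved by f both efficiently entails (O₂(x₁,x₂) → x₃ = x₄) and entails (uuO₂(x₁,x₂) ∧ uuO₂(x₃,x₄)). -/
universe u

variable {A : Type u}

theorem stmt16 (E : A → A → Prop) (hG : IsSimpleGraph E)
    (O₁ O₂ : A → A → Prop) (f : A → A → A) (hfinj : BinInj f)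
    (hcase : BinCase E O₁ O₂ f) :
    ∀ R : Set (Fin 4 → A), Preserves2 f R →
      ¬ (EffEntails R O₂ (fun a b => a = b) ∧
         Entails R (fun x₁ x₂ x₃ x₄ => uu O₂ x₁ x₂ ∧ uu O₂ x₃ x₄)) := by
  rintro R hpres ⟨⟨himp, ⟨t1, ht1R, ht1O, ht1eq⟩, ⟨t2, ht2R, ht2nO, ht2ne⟩⟩, hent⟩
  -- injectivity helpers
  have inj : ∀ a b a' b', f a b = f a' b' → a = a' ∧ b = b' := by
    intro a b a' b' h
    have := hfinj (show (fun p : A × A => f p.1 p.2) (a, b) = (fun p : A × A => f p.1 p.2) (a', b') from h)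
    exact Prod.mk.injEq .. ▸ this
  set s : Fin 4 → A := fun j => f (t1 j) (t2 j) with hs_def
  have hsR : s ∈ R := hpres t1 t2 ht1R ht2R
  have hsuu := hent s hsR
  have ht2uu := hent t2 ht2R
  rcases hcase with ⟨hO1, hO2, hf⟩ | ⟨hO1, hO2, hf⟩
  · -- O₂ = NRel E
    subst hO2
    have ht1ne : t1 0 ≠ t1 1 := ht1O.1
    have ht2eq : t2 0 = t2 1 := by
      rcases ht2uu.1 with h | h
      · exact absurd h ht2nO
      · exact h
    have ht2N : NRel E (t2 2) (t2 3) := by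
      rcases ht2uu.2 with h | h
      · exact h
      · exact absurd h ht2ne
    have hs01 : s 0 ≠ s 1 := fun h => ht1ne (inj _ _ _ _ h).1
    have hs23 : s 2 ≠ s 3 := fun h => ht2ne (inj _ _ _ _ h).2
    rcases hf with ⟨_, hbal⟩ | ⟨_, hdom⟩ | hcon
    · have hN : NRel E (s 0) (s 1) :=
        (hbal (t1 0) (t2 0) (t1 1) (t2 1)).2 (Or.inl ⟨ht1O, ht2eq⟩)
      exact hs23 (himp s hsR hN)
    · have hE : E (s 0) (s 1) :=
        hdom (t1 0) (t2 0) (t1 1) (t2 1) (Or.inr ⟨ht1ne, ht2eq⟩)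
      rcases hsuu.1 with h | h
      · exact h.2 hE
      · exact hs01 h
    · have hE : E (s 0) (s 1) := hcon _ _ _ _ hs01
      rcases hsuu.1 with h | h
      · exact h.2 hE
      · exact hs01 h
  · -- O₂ = E
    rw [hO2] at ht1O ht2nO hsuu ht2uu himp
    have ht1ne : t1 0 ≠ t1 1 := by
      intro h; exact hG.2 (t1 1) (h ▸ ht1O)
    have ht2eq : t2 0 = t2 1 := by
      rcases ht2uu.1 with h | h
      · exact absurd h ht2nO
      · exact h
    have ht2E : E (t2 2) (t2 3) := by
      rcases ht2uu.2 with h | h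
      · exact h
      · exact absurd h ht2ne
    have hs01 : s 0 ≠ s 1 := fun h => ht1ne (inj _ _ _ _ h).1
    have hs23 : s 2 ≠ s 3 := fun h => ht2ne (inj _ _ _ _ h).2
    rcases hf with ⟨_, hbal⟩ | ⟨_, hdom⟩ | hcon
    · have hE : E (s 0) (s 1) :=
        (hbal (t1 0) (t2 0) (t1 1) (t2 1)).1 (Or.inl ⟨ht1O, ht2eq⟩)
      exact hs23 (himp s hsR hE)
    · have hN : NRel E (s 0) (s 1) :=
        hdom (t1 0) (t2 0) (t1 1) (t2 1) (Or.inr ⟨ht1ne, ht2eq⟩)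
      rcases hsuu.1 with h | h
      · exact hN.2 h
      · exact hs01 h
    · have hN : NRel E (s 0) (s 1) := hcon _ _ _ _ hs01
      rcases hsuu.1 with h | h
      · exact hN.2 h
      · exact hs01 h
end

section
/- Let A = Bool × ℕ and define binary relations on A by E(a,b) iff a ≠ b and a.1 = b.1, and N(a,b) iff a.1 ≠ b.1 (so (A;E) is the disjoint union of two countably infinite cliques C^ω_2). Define the ternary relation R ⊆ A³ by R(x,y,z) iff (E(x,y) ∧ N(y,z)) ∨ (N(x,y) ∧ E(y,z)). Let maj : Bool³ → Bool be the Boolean majority function and let i : ℕ × ℕ × ℕ → ℕ be any injective function. Then the ternary operation f : A³ → A defined by f((d₁,e₁),(d₂,e₂),(d₃,e₃)) = (maj(d₁,d₂,d₃), i(e₁,e₂,e₃)) preserves E, preserves N, and preserves R. -/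
universe u

variable {A : Type u}

/-- The edge relation of `C^ω_2` realized on `Bool × ℕ`: two distinct vertices
are adjacent iff they lie in the same clique. -/
def E17 (a b : Bool × ℕ) : Prop := a ≠ b ∧ a.1 = b.1

/-- The non-adjacency relation on `Bool × ℕ`. -/
def N17 (a b : Bool × ℕ) : Prop := a.1 ≠ b.1

/-- The ternary relation `R(x,y,z) ≡ (E(x,y) ∧ N(y,z)) ∨ (N(x,y) ∧ E(y,z))`. -/
def R17 (x y z : Bool × ℕ) : Prop := (E17 x y ∧ N17 y z) ∨ (N17 x y ∧ E17 y z)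

/-- The Boolean majority function: true iff at least two arguments are true. -/
def bmaj (x y z : Bool) : Bool := (x && y) || (x && z) || (y && z)

lemma bmaj_not (a b c : Bool) : bmaj (!a) (!b) (!c) = !(bmaj a b c) := by
  revert a b c; decide

set_option maxHeartbeats 1000000 in
set_option synthInstance.maxHeartbeats 1000000 in
set_option synthInstance.maxSize 2000 in
lemma bmaj_key (p₁ p₂ p₃ q₁ q₂ q₃ r₁ r₂ r₃ : Bool)
    (hp : (p₁ = p₂ ∧ p₂ ≠ p₃) ∨ (p₁ ≠ p₂ ∧ p₂ = p₃))
    (hq : (q₁ = q₂ ∧ q₂ ≠ q₃) ∨ (q₁ ≠ q₂ ∧ q₂ = q₃))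
    (hr : (r₁ = r₂ ∧ r₂ ≠ r₃) ∨ (r₁ ≠ r₂ ∧ r₂ = r₃)) :
    (bmaj p₁ q₁ r₁ = bmaj p₂ q₂ r₂ ∧ bmaj p₂ q₂ r₂ ≠ bmaj p₃ q₃ r₃ ∧
      (p₁ = p₂ ∨ q₁ = q₂ ∨ r₁ = r₂)) ∨
    (bmaj p₁ q₁ r₁ ≠ bmaj p₂ q₂ r₂ ∧ bmaj p₂ q₂ r₂ = bmaj p₃ q₃ r₃ ∧
      (p₂ = p₃ ∨ q₂ = q₃ ∨ r₂ = r₃)) := by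
  revert p₁ p₂ p₃ q₁ q₂ q₃ r₁ r₂ r₃; decide

theorem stmt17 (i : ℕ × ℕ × ℕ → ℕ) (hi : Function.Injective i) :
    let f : (Bool × ℕ) → (Bool × ℕ) → (Bool × ℕ) → (Bool × ℕ) :=
      fun a b c => (bmaj a.1 b.1 c.1, i (a.2, b.2, c.2))
    (∀ a₁ b₁ c₁ a₂ b₂ c₂ : Bool × ℕ, E17 a₁ a₂ → E17 b₁ b₂ → E17 c₁ c₂ →
        E17 (f a₁ b₁ c₁) (f a₂ b₂ c₂)) ∧
    (∀ a₁ b₁ c₁ a₂ b₂ c₂ : Bool × ℕ, N17 a₁ a₂ → N17 b₁ b₂ → N17 c₁ c₂ →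
        N17 (f a₁ b₁ c₁) (f a₂ b₂ c₂)) ∧
    (∀ x₁ x₂ x₃ y₁ y₂ y₃ z₁ z₂ z₃ : Bool × ℕ,
        R17 x₁ x₂ x₃ → R17 y₁ y₂ y₃ → R17 z₁ z₂ z₃ →
        R17 (f x₁ y₁ z₁) (f x₂ y₂ z₂) (f x₃ y₃ z₃)) := by
  intro f
  have hine : ∀ p q : ℕ × ℕ × ℕ, p ≠ q → i p ≠ i q := fun p q h => fun e => h (hi e)
  have esnd : ∀ a b : Bool × ℕ, E17 a b → a.2 ≠ b.2 := by
    rintro a b ⟨hne, he⟩ h2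
    exact hne (Prod.ext he h2)
  refine ⟨?_, ?_, ?_⟩
  · rintro a₁ b₁ c₁ a₂ b₂ c₂ ha hb hc
    constructor
    · intro h
      have h2 : i (a₁.2, b₁.2, c₁.2) = i (a₂.2, b₂.2, c₂.2) := congrArg Prod.snd h
      have := hi h2
      exact esnd a₁ a₂ ha (congrArg (fun p => p.1) this)
    · simp only [f, ha.2, hb.2, hc.2]
  · rintro a₁ b₁ c₁ a₂ b₂ c₂ ha hb hc
    have ha' : a₂.1 = !a₁.1 := by cases h1 : a₁.1 <;> cases h2 : a₂.1 <;> simp_all [N17]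
    have hb' : b₂.1 = !b₁.1 := by cases h1 : b₁.1 <;> cases h2 : b₂.1 <;> simp_all [N17]
    have hc' : c₂.1 = !c₁.1 := by cases h1 : c₁.1 <;> cases h2 : c₂.1 <;> simp_all [N17]
    show bmaj a₁.1 b₁.1 c₁.1 ≠ bmaj a₂.1 b₂.1 c₂.1
    rw [ha', hb', hc', bmaj_not]
    cases bmaj a₁.1 b₁.1 c₁.1 <;> simp
  · intro x₁ x₂ x₃ y₁ y₂ y₃ z₁ z₂ z₃ hx hy hz
    have norm : ∀ u v w : Bool × ℕ, R17 u v w →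
        ((u.1 = v.1 ∧ u.2 ≠ v.2 ∧ v.1 ≠ w.1) ∨ (u.1 ≠ v.1 ∧ v.1 = w.1 ∧ v.2 ≠ w.2)) := by
      rintro u v w (⟨he, hn⟩ | ⟨hn, he⟩)
      · exact Or.inl ⟨he.2, esnd u v he, hn⟩
      · exact Or.inr ⟨hn, he.2, esnd v w he⟩
    have hx' := norm _ _ _ hx
    have hy' := norm _ _ _ hy
    have hz' := norm _ _ _ hz
    have key := bmaj_key x₁.1 x₂.1 x₃.1 y₁.1 y₂.1 y₃.1 z₁.1 z₂.1 z₃.1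
      (hx'.imp (fun h => ⟨h.1, h.2.2⟩) (fun h => ⟨h.1, h.2.1⟩))
      (hy'.imp (fun h => ⟨h.1, h.2.2⟩) (fun h => ⟨h.1, h.2.1⟩))
      (hz'.imp (fun h => ⟨h.1, h.2.2⟩) (fun h => ⟨h.1, h.2.1⟩))
    rcases key with ⟨h12, h23, heq⟩ | ⟨h12, h23, heq⟩
    · -- E at (1,2), N at (2,3)
      refine Or.inl ⟨⟨?_, h12⟩, h23⟩
      -- distinctness of out1 out2
      have hsnd : (x₁.2, y₁.2, z₁.2) ≠ (x₂.2, y₂.2, z₂.2) := by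
        rcases heq with h | h | h
        · rcases hx' with ⟨_, h2, _⟩ | ⟨hn, _, _⟩
          · intro e; exact h2 (congrArg (fun p => p.1) e)
          · exact absurd h hn
        · rcases hy' with ⟨_, h2, _⟩ | ⟨hn, _, _⟩
          · intro e; exact h2 (congrArg (fun p => p.2.1) e)
          · exact absurd h hn
        · rcases hz' with ⟨_, h2, _⟩ | ⟨hn, _, _⟩
          · intro e; exact h2 (congrArg (fun p => p.2.2) e)
          · exact absurd h hn
      intro e
      exact hine _ _ hsnd (congrArg Prod.snd e)
    · -- N at (1,2), E at (2,3)
      refine Or.inr ⟨h12, ⟨?_, h23⟩⟩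
      have hsnd : (x₂.2, y₂.2, z₂.2) ≠ (x₃.2, y₃.2, z₃.2) := by
        rcases heq with h | h | h
        · rcases hx' with ⟨_, _, hn⟩ | ⟨_, _, h2⟩
          · exact absurd h hn
          · intro e; exact h2 (congrArg (fun p => p.1) e)
        · rcases hy' with ⟨_, _, hn⟩ | ⟨_, _, h2⟩
          · exact absurd h hn
          · intro e; exact h2 (congrArg (fun p => p.2.1) e)
        · rcases hz' with ⟨_, _, hn⟩ | ⟨_, _, h2⟩
          · exact absurd h hn
          · intro e; exact h2 (congrArg (fun p => p.2.2) e)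
      intro e
      exact hine _ _ hsnd (congrArg Prod.snd e)
end

section
/- Let G = (A;E) be a countably infinite graph with the extension property. For every r ≥ 0 and every m ≥ r + 2, with p = 2m + 1, there exists a p-ary quasi near-unanimity operation f : A^p → A which preserves E and N and which preserves every relation R_φ defined by a single clause φ of the following form: for k, l ≥ 0 with k + l ≤ r and R₀ ∈ {E,N}, R_φ ⊆ A^(k+2+l) is the set of all tuples (a₁,…,a_k,b₁,b₂,c₁,…,c_l) satisfying (a₁ ≠ b₁ ∨ ⋯ ∨ a_k ≠ b₁ ∨ R₀(b₁,b₂) ∨ b₂ ≠ c₁ ∨ ⋯ ∨ b₂ ≠ c_l). -/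
universe u

variable {A : Type u}

/-- The `(k+2+l)`-ary relation defined by the clause
`(a₁ ≠ b₁ ∨ ⋯ ∨ a_k ≠ b₁ ∨ R₀(b₁,b₂) ∨ b₂ ≠ c₁ ∨ ⋯ ∨ b₂ ≠ c_l)`,
where the `a`'s occupy the first `k` coordinates, `b₁,b₂` the next two, and
the `c`'s the last `l` coordinates. -/
def ClauseRel (R₀ : A → A → Prop) (k l : ℕ) : Set (Fin (k + 2 + l) → A) :=
  {t | (∃ i : Fin k, t (Fin.castAdd l (Fin.castAdd 2 i)) ≠
          t (Fin.castAdd l (⟨k, by omega⟩ : Fin (k + 2)))) ∨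
       R₀ (t (Fin.castAdd l (⟨k, by omega⟩ : Fin (k + 2))))
          (t (Fin.castAdd l (⟨k + 1, by omega⟩ : Fin (k + 2)))) ∨
       (∃ j : Fin l, t (Fin.castAdd l (⟨k + 1, by omega⟩ : Fin (k + 2))) ≠
          t (Fin.natAdd (k + 2) j))}


section Stmt18Aux

open scoped Classical


noncomputable def seqG {A : Type u} (E : A → A → Prop)
    (hX : ∀ U U' W : Finset A, Disjoint U U' →
      ∃ v, v ∉ W ∧ (∀ u ∈ U, E v u) ∧ ∀ u ∈ U', ¬ E v u)
    {ι : Type v} (e : ι → ℕ) (Q : ι → ι → Prop) (n : ℕ) : A :=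
  (hX (Finset.image (fun k : Fin n => seqG E hX e Q k)
        (Finset.univ.filter fun k : Fin n => ∃ c', e c' = (k : ℕ) ∧ ∃ c, e c = n ∧ Q c' c))
      ((Finset.image (fun k : Fin n => seqG E hX e Q k)
        (Finset.univ.filter fun k : Fin n => ∃ c', e c' = (k : ℕ) ∧ ∃ c, e c = n ∧ ¬ Q c' c)) \
       Finset.image (fun k : Fin n => seqG E hX e Q k)
        (Finset.univ.filter fun k : Fin n => ∃ c', e c' = (k : ℕ) ∧ ∃ c, e c = n ∧ Q c' c))
      (Finset.image (fun k : Fin n => seqG E hX e Q k) Finset.univ)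
      Finset.sdiff_disjoint.symm).choose
termination_by n
decreasing_by all_goals exact k.isLt

lemma seqG_spec {A : Type u} (E : A → A → Prop)
    (hX : ∀ U U' W : Finset A, Disjoint U U' →
      ∃ v, v ∉ W ∧ (∀ u ∈ U, E v u) ∧ ∀ u ∈ U', ¬ E v u)
    {ι : Type v} (e : ι → ℕ) (Q : ι → ι → Prop) (n : ℕ) :
    seqG E hX e Q n ∉ Finset.image (fun k : Fin n => seqG E hX e Q k) Finset.univ ∧
    (∀ u ∈ Finset.image (fun k : Fin n => seqG E hX e Q k)
        (Finset.univ.filter fun k : Fin n => ∃ c', e c' = (k : ℕ) ∧ ∃ c, e c = n ∧ Q c' c),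
      E (seqG E hX e Q n) u) ∧
    (∀ u ∈ (Finset.image (fun k : Fin n => seqG E hX e Q k)
        (Finset.univ.filter fun k : Fin n => ∃ c', e c' = (k : ℕ) ∧ ∃ c, e c = n ∧ ¬ Q c' c)) \
       Finset.image (fun k : Fin n => seqG E hX e Q k)
        (Finset.univ.filter fun k : Fin n => ∃ c', e c' = (k : ℕ) ∧ ∃ c, e c = n ∧ Q c' c),
      ¬ E (seqG E hX e Q n) u) := by
  have h : seqG E hX e Q n = (hX (Finset.image (fun k : Fin n => seqG E hX e Q k)
        (Finset.univ.filter fun k : Fin n => ∃ c', e c' = (k : ℕ) ∧ ∃ c, e c = n ∧ Q c' c))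
      ((Finset.image (fun k : Fin n => seqG E hX e Q k)
        (Finset.univ.filter fun k : Fin n => ∃ c', e c' = (k : ℕ) ∧ ∃ c, e c = n ∧ ¬ Q c' c)) \
       Finset.image (fun k : Fin n => seqG E hX e Q k)
        (Finset.univ.filter fun k : Fin n => ∃ c', e c' = (k : ℕ) ∧ ∃ c, e c = n ∧ Q c' c))
      (Finset.image (fun k : Fin n => seqG E hX e Q k) Finset.univ)
      Finset.sdiff_disjoint.symm).choose := by rw [seqG]
  rw [h]
  exact (hX _ _ _ Finset.sdiff_disjoint.symm).choose_spec

lemma seqG_ne {A : Type u} (E : A → A → Prop)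
    (hX : ∀ U U' W : Finset A, Disjoint U U' →
      ∃ v, v ∉ W ∧ (∀ u ∈ U, E v u) ∧ ∀ u ∈ U', ¬ E v u)
    {ι : Type v} (e : ι → ℕ) (Q : ι → ι → Prop) {k n : ℕ} (h : k < n) :
    seqG E hX e Q k ≠ seqG E hX e Q n := by
  intro heq
  exact (seqG_spec E hX e Q n).1
    (Finset.mem_image.mpr ⟨⟨k, h⟩, Finset.mem_univ _, heq⟩)

lemma seqG_E {A : Type u} (E : A → A → Prop)
    (hX : ∀ U U' W : Finset A, Disjoint U U' →
      ∃ v, v ∉ W ∧ (∀ u ∈ U, E v u) ∧ ∀ u ∈ U', ¬ E v u)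
    {ι : Type v} (e : ι → ℕ) (Q : ι → ι → Prop) {c c' : ι}
    (hlt : e c' < e c) (hq : Q c' c) :
    E (seqG E hX e Q (e c)) (seqG E hX e Q (e c')) := by
  apply (seqG_spec E hX e Q (e c)).2.1
  exact Finset.mem_image.mpr ⟨⟨e c', hlt⟩, Finset.mem_filter.mpr
    ⟨Finset.mem_univ _, c', rfl, c, rfl, hq⟩, rfl⟩

lemma seqG_notE {A : Type u} (E : A → A → Prop)
    (hX : ∀ U U' W : Finset A, Disjoint U U' →
      ∃ v, v ∉ W ∧ (∀ u ∈ U, E v u) ∧ ∀ u ∈ U', ¬ E v u)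
    {ι : Type v} (e : ι → ℕ) (he : Function.Injective e) (Q : ι → ι → Prop) {c c' : ι}
    (hlt : e c' < e c) (hq : ¬ Q c' c) :
    ¬ E (seqG E hX e Q (e c)) (seqG E hX e Q (e c')) := by
  apply (seqG_spec E hX e Q (e c)).2.2
  refine Finset.mem_sdiff.mpr ⟨Finset.mem_image.mpr ⟨⟨e c', hlt⟩, Finset.mem_filter.mpr
    ⟨Finset.mem_univ _, c', rfl, c, rfl, hq⟩, rfl⟩, ?_⟩
  intro hmem
  obtain ⟨j, hj, hjeq⟩ := Finset.mem_image.mp hmem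
  have hjk : (j : ℕ) = e c' := by
    by_contra hne
    rcases Nat.lt_or_ge (j : ℕ) (e c') with hlt' | hge
    · exact seqG_ne E hX e Q hlt' hjeq
    · exact seqG_ne E hX e Q (lt_of_le_of_ne hge (Ne.symm hne)) hjeq.symm
  obtain ⟨c₁, hc₁, c₀, hc₀, hQ₁⟩ := (Finset.mem_filter.mp hj).2
  have h1 : c₁ = c' := he (hc₁.trans hjk)
  have h2 : c₀ = c := he hc₀
  exact hq (h1 ▸ h2 ▸ hQ₁)

lemma exists_emb {A : Type u} (E : A → A → Prop) (hsym : ∀ a b, E a b → E b a)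
    (hX : ∀ U U' W : Finset A, Disjoint U U' →
      ∃ v, v ∉ W ∧ (∀ u ∈ U, E v u) ∧ ∀ u ∈ U', ¬ E v u)
    {ι : Type v} [Countable ι] (Q : ι → ι → Prop) (hQs : ∀ c c', Q c c' → Q c' c) :
    ∃ F : ι → A, Function.Injective F ∧ ∀ c c', c ≠ c' → (E (F c) (F c') ↔ Q c c') := by
  obtain ⟨e, he⟩ := exists_injective_nat ι
  have key : ∀ c c' : ι, e c' < e c → (E (seqG E hX e Q (e c)) (seqG E hX e Q (e c')) ↔ Q c c') := by
    intro c c' hlt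
    constructor
    · intro hE
      by_contra hq
      exact seqG_notE E hX e he Q hlt (fun h => hq (hQs _ _ h)) hE
    · intro hq
      exact seqG_E E hX e Q hlt (hQs _ _ hq)
  refine ⟨fun c => seqG E hX e Q (e c), ?_, ?_⟩
  · intro c c' h
    by_contra hne
    have hee : e c ≠ e c' := fun h' => hne (he h')
    rcases hee.lt_or_gt with hlt | hlt
    · exact seqG_ne E hX e Q hlt h
    · exact seqG_ne E hX e Q hlt h.symm
  · intro c c' hne
    have hee : e c ≠ e c' := fun h' => hne (he h')
    rcases hee.lt_or_gt with hlt | hlt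
    · constructor
      · intro hE
        exact hQs _ _ ((key c' c hlt).mp (hsym _ _ hE))
      · intro hq
        exact hsym _ _ ((key c' c hlt).mpr (hQs _ _ hq))
    · exact key c c' hlt


lemma extAux {A : Type u} (E : A → A → Prop) (hsym : ∀ a b, E a b → E b a)
    (hirr : ∀ a, ¬ E a a) (hext : ExtensionProperty E) :
    ∀ U U' W : Finset A, Disjoint U U' →
      ∃ v, v ∉ W ∧ (∀ u ∈ U, E v u) ∧ ∀ u ∈ U', ¬ E v u := by
  intro U U' W hd
  obtain ⟨z, hz, -⟩ := hext (U ∪ U' ∪ W) ∅ (Finset.disjoint_empty_right _)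
  have hzU : z ∉ U := fun h => hirr z (hz z (by simp [h]))
  obtain ⟨v, hv1, hv2⟩ := hext U (U' ∪ {z}) (by
    rw [Finset.disjoint_union_right]
    exact ⟨hd, Finset.disjoint_singleton_right.mpr hzU⟩)
  refine ⟨v, ?_, hv1, fun u hu => hv2 u (by simp [hu])⟩
  intro hvW
  have h1 : E z v := hz v (by simp [hvW])
  exact hv2 z (by simp) (hsym z v h1)

/-- `t` is a near-unanimous tuple. -/
def NUb {A : Type u} (p : ℕ) (t : Fin p → A) : Prop :=
  ∃ x : A, ((Finset.univ : Finset (Fin p)).filter fun i => t i ≠ x).card ≤ 1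

/-- The class of a tuple. -/
noncomputable def clsF {A : Type u} (p : ℕ) (t : Fin p → A) :
    A ⊕ {t : Fin p → A // ¬ NUb p t} :=
  if h : NUb p t then Sum.inl h.choose else Sum.inr ⟨t, h⟩

/-- The canonical representative of a class. -/
def cnF {A : Type u} (p : ℕ) : (A ⊕ {t : Fin p → A // ¬ NUb p t}) → Fin p → A :=
  Sum.elim (fun x _ => x) Subtype.val

lemma NUb_uniq {A : Type u} {p : ℕ} (hp : 3 ≤ p) {t : Fin p → A} {x y : A}
    (hx : ((Finset.univ : Finset (Fin p)).filter fun i => t i ≠ x).card ≤ 1)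
    (hy : ((Finset.univ : Finset (Fin p)).filter fun i => t i ≠ y).card ≤ 1) : x = y := by
  by_contra hne
  have hsub : (Finset.univ : Finset (Fin p)) ⊆
      ((Finset.univ : Finset (Fin p)).filter fun i => t i ≠ x) ∪
        (Finset.univ.filter fun i => t i ≠ y) := by
    intro i _
    rw [Finset.mem_union]
    by_contra hmem
    push_neg at hmem
    obtain ⟨h1, h2⟩ := hmem
    simp only [Finset.mem_filter, Finset.mem_univ, true_and, ne_eq, not_not] at h1 h2
    exact hne (h1.symm.trans h2)
  have h3 := Finset.card_le_card hsub
  have h4 := Finset.card_union_le ((Finset.univ : Finset (Fin p)).filter fun i => t i ≠ x)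
      (Finset.univ.filter fun i => t i ≠ y)
  rw [Finset.card_univ, Fintype.card_fin] at h3
  omega

lemma clsF_eq_inl {A : Type u} {p : ℕ} (hp : 3 ≤ p) {t : Fin p → A} {x : A}
    (hx : ((Finset.univ : Finset (Fin p)).filter fun i => t i ≠ x).card ≤ 1) :
    clsF p t = Sum.inl x := by
  have h : NUb p t := ⟨x, hx⟩
  rw [clsF, dif_pos h]
  exact congrArg Sum.inl (NUb_uniq hp h.choose_spec hx)

lemma cnF_dev {A : Type u} {p : ℕ} (t : Fin p → A) :
    ((Finset.univ : Finset (Fin p)).filter fun i => t i ≠ cnF p (clsF p t) i).card ≤ 1 := by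
  by_cases h : NUb p t
  · simp only [clsF, dif_pos h, cnF, Sum.elim_inl]
    exact h.choose_spec
  · simp [clsF, dif_neg h, cnF]

end Stmt18Aux

theorem stmt18 (E : A → A → Prop) (hG : IsSimpleGraph E)
    [Countable A] [Infinite A] (hext : ExtensionProperty E)
    (r m : ℕ) (hm : r + 2 ≤ m) :
    ∃ f : (Fin (2 * m + 1) → A) → A,
      IsQnu f ∧ PreservesRel f E ∧ PreservesRel f (NRel E) ∧
      ∀ k l : ℕ, k + l ≤ r → ∀ R₀ : A → A → Prop, (R₀ = E ∨ R₀ = NRel E) →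
        Preserves f (ClauseRel R₀ k l) := by
  classical
  obtain ⟨hsym, hirr⟩ := hG
  have hX := extAux E hsym hirr hext
  have hp3 : 3 ≤ 2 * m + 1 := by omega
  set p : ℕ := 2 * m + 1 with hp
  have cardU : (Finset.univ : Finset (Fin p)).card = p := by simp
  obtain ⟨F, hFinj, hF⟩ := exists_emb E hsym hX
    (fun c c' : A ⊕ {t : Fin p → A // ¬ NUb p t} =>
      m + 1 ≤ ((Finset.univ : Finset (Fin p)).filter fun rr => E (cnF p c rr) (cnF p c' rr)).card)
    (by
      intro c c' h
      refine le_trans h (Finset.card_le_card ?_)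
      intro rr hrr
      simp only [Finset.mem_filter, Finset.mem_univ, true_and] at hrr ⊢
      exact hsym _ _ hrr)
  have coreE : ∀ u v : Fin p → A,
      m + 1 ≤ ((Finset.univ : Finset (Fin p)).filter fun rr =>
        E (cnF p (clsF p u) rr) (cnF p (clsF p v) rr)).card →
      E (F (clsF p u)) (F (clsF p v)) := by
    intro u v h
    have hne : clsF p u ≠ clsF p v := by
      intro hc
      rw [hc] at h
      have hemp : ((Finset.univ : Finset (Fin p)).filter fun rr =>
          E (cnF p (clsF p v) rr) (cnF p (clsF p v) rr)) = ∅ :=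
        Finset.filter_eq_empty_iff.mpr (fun rr _ => hirr _)
      rw [hemp, Finset.card_empty] at h
      omega
    exact (hF _ _ hne).mpr h
  have coreN : ∀ u v : Fin p → A,
      m + 1 ≤ ((Finset.univ : Finset (Fin p)).filter fun rr =>
        NRel E (cnF p (clsF p u) rr) (cnF p (clsF p v) rr)).card →
      NRel E (F (clsF p u)) (F (clsF p v)) := by
    intro u v h
    have hne : clsF p u ≠ clsF p v := by
      intro hc
      rw [hc] at h
      have hemp : ((Finset.univ : Finset (Fin p)).filter fun rr =>
          NRel E (cnF p (clsF p v) rr) (cnF p (clsF p v) rr)) = ∅ :=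
        Finset.filter_eq_empty_iff.mpr (fun rr _ hN => hN.1 rfl)
      rw [hemp, Finset.card_empty] at h
      omega
    refine ⟨fun heq => hne (hFinj heq), ?_⟩
    intro hE
    have hq := (hF _ _ hne).mp hE
    have hdisj : Disjoint
        ((Finset.univ : Finset (Fin p)).filter fun rr =>
          E (cnF p (clsF p u) rr) (cnF p (clsF p v) rr))
        ((Finset.univ : Finset (Fin p)).filter fun rr =>
          NRel E (cnF p (clsF p u) rr) (cnF p (clsF p v) rr)) := by
      rw [Finset.disjoint_left]
      intro a ha hb
      exact (Finset.mem_filter.mp hb).2.2 (Finset.mem_filter.mp ha).2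
    have hcard := Finset.card_union_of_disjoint hdisj
    have hsub := Finset.card_le_card (Finset.subset_univ
      (((Finset.univ : Finset (Fin p)).filter fun rr =>
          E (cnF p (clsF p u) rr) (cnF p (clsF p v) rr)) ∪
        ((Finset.univ : Finset (Fin p)).filter fun rr =>
          NRel E (cnF p (clsF p u) rr) (cnF p (clsF p v) rr))))
    rw [cardU] at hsub
    omega
  have devsub : ∀ (u v : Fin p → A) (P : A → A → Prop), (∀ rr : Fin p, P (u rr) (v rr)) →
      m + 1 ≤ ((Finset.univ : Finset (Fin p)).filter fun rr =>
        P (cnF p (clsF p u) rr) (cnF p (clsF p v) rr)).card := by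
    intro u v P hP
    have hsub : (Finset.univ : Finset (Fin p)) \
        ((Finset.univ.filter fun i => u i ≠ cnF p (clsF p u) i) ∪
          (Finset.univ.filter fun i => v i ≠ cnF p (clsF p v) i)) ⊆
        Finset.univ.filter fun rr => P (cnF p (clsF p u) rr) (cnF p (clsF p v) rr) := by
      intro rr hrr
      simp only [Finset.mem_sdiff, Finset.mem_union, Finset.mem_filter, Finset.mem_univ,
        true_and, not_or, ne_eq, not_not] at hrr
      obtain ⟨h1, h2⟩ := hrr
      simp only [Finset.mem_filter, Finset.mem_univ, true_and]
      rw [← h1, ← h2]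
      exact hP rr
    have h1 := cnF_dev u
    have h2 := cnF_dev v
    have hcu := Finset.card_union_le
      ((Finset.univ : Finset (Fin p)).filter fun i => u i ≠ cnF p (clsF p u) i)
      (Finset.univ.filter fun i => v i ≠ cnF p (clsF p v) i)
    have hsd := Finset.card_sdiff_of_subset (Finset.subset_univ
      (((Finset.univ : Finset (Fin p)).filter fun i => u i ≠ cnF p (clsF p u) i) ∪
        (Finset.univ.filter fun i => v i ≠ cnF p (clsF p v) i)))
    rw [cardU] at hsd
    have hc := Finset.card_le_card hsub
    omega
  refine ⟨fun t => F (clsF p t), ?_, ?_, ?_, ?_⟩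
  · -- IsQnu
    intro x y j
    have h1 : clsF p (fun _ : Fin p => x) = Sum.inl x := by
      apply clsF_eq_inl hp3
      have hemp : ((Finset.univ : Finset (Fin p)).filter fun i => (fun _ : Fin p => x) i ≠ x) = ∅ :=
        Finset.filter_eq_empty_iff.mpr (fun i _ h => h rfl)
      rw [hemp, Finset.card_empty]
      omega
    have h2 : clsF p (Function.update (fun _ : Fin p => x) j y) = Sum.inl x := by
      apply clsF_eq_inl hp3
      refine le_trans (Finset.card_le_card (fun i hi => ?_)) (le_of_eq (Finset.card_singleton j))
      simp only [Finset.mem_filter, Finset.mem_univ, true_and, ne_eq] at hi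
      simp only [Finset.mem_singleton]
      by_contra hne
      exact hi (Function.update_of_ne hne y (fun _ => x))
    show F (clsF p (Function.update (fun _ => x) j y)) = F (clsF p (fun _ => x))
    rw [h1, h2]
  · -- preserves E
    intro u v h
    exact coreE u v (devsub u v E h)
  · -- preserves N
    intro u v h
    exact coreN u v (devsub u v (NRel E) h)
  · -- clause relations
    intro k l hkl R₀ hR₀ t ht
    by_contra hcon
    simp only [ClauseRel, Set.mem_setOf_eq] at hcon
    push_neg at hcon
    obtain ⟨hA, hR, hC⟩ := hcon
    have hclsA : ∀ i : Fin k,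
        clsF p (fun i' => t i' (Fin.castAdd l (Fin.castAdd 2 i))) =
        clsF p (fun i' => t i' (Fin.castAdd l (⟨k, by omega⟩ : Fin (k+2)))) :=
      fun i => hFinj (hA i)
    have hclsC : ∀ j : Fin l,
        clsF p (fun i' => t i' (Fin.natAdd (k+2) j)) =
        clsF p (fun i' => t i' (Fin.castAdd l (⟨k+1, by omega⟩ : Fin (k+2)))) :=
      fun j => (hFinj (hC j)).symm
    have hGd : m + 1 ≤ ((Finset.univ : Finset (Fin p)).filter fun rr => ∀ q : Fin (k+2+l),
        t rr q = cnF p (clsF p (fun i' => t i' q)) rr).card := by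
      have hsub2 : (Finset.univ : Finset (Fin p)) \
          (Finset.univ.biUnion (fun q : Fin (k+2+l) =>
            Finset.univ.filter fun rr : Fin p =>
              t rr q ≠ cnF p (clsF p (fun i' => t i' q)) rr)) ⊆
          Finset.univ.filter fun rr : Fin p => ∀ q : Fin (k+2+l),
            t rr q = cnF p (clsF p (fun i' => t i' q)) rr := by
        intro rr hrr
        rw [Finset.mem_sdiff] at hrr
        refine Finset.mem_filter.mpr ⟨Finset.mem_univ _, fun q => ?_⟩
        by_contra hq
        exact hrr.2 (Finset.mem_biUnion.mpr ⟨q, Finset.mem_univ _,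
          Finset.mem_filter.mpr ⟨Finset.mem_univ _, hq⟩⟩)
      have hbig : (Finset.univ.biUnion (fun q : Fin (k+2+l) =>
          Finset.univ.filter fun rr : Fin p =>
            t rr q ≠ cnF p (clsF p (fun i' => t i' q)) rr)).card ≤ k + 2 + l := by
        refine le_trans Finset.card_biUnion_le ?_
        calc ∑ q : Fin (k+2+l), (Finset.univ.filter fun rr : Fin p =>
              t rr q ≠ cnF p (clsF p (fun i' => t i' q)) rr).card
            ≤ ∑ _q : Fin (k+2+l), 1 :=
              Finset.sum_le_sum (fun q _ => cnF_dev (fun i' => t i' q))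
          _ = k + 2 + l := by simp
      have hsd := Finset.card_sdiff_of_subset (Finset.subset_univ
        (Finset.univ.biUnion (fun q : Fin (k+2+l) =>
          Finset.univ.filter fun rr : Fin p =>
            t rr q ≠ cnF p (clsF p (fun i' => t i' q)) rr)))
      rw [cardU] at hsd
      have hcc := Finset.card_le_card hsub2
      omega
    have hsubR : ((Finset.univ : Finset (Fin p)).filter fun rr => ∀ q : Fin (k+2+l),
          t rr q = cnF p (clsF p (fun i' => t i' q)) rr) ⊆
        Finset.univ.filter fun rr =>
          R₀ (cnF p (clsF p (fun i' => t i' (Fin.castAdd l (⟨k, by omega⟩ : Fin (k+2))))) rr)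
             (cnF p (clsF p (fun i' => t i' (Fin.castAdd l (⟨k+1, by omega⟩ : Fin (k+2))))) rr) := by
      intro rr hrr
      have hrP := (Finset.mem_filter.mp hrr).2
      refine Finset.mem_filter.mpr ⟨Finset.mem_univ _, ?_⟩
      have htr := ht rr
      simp only [ClauseRel, Set.mem_setOf_eq] at htr
      rcases htr with ⟨i, hi⟩ | hrow | ⟨j, hj⟩
      · exact absurd (calc
          t rr (Fin.castAdd l (Fin.castAdd 2 i))
              = cnF p (clsF p (fun i' => t i' (Fin.castAdd l (Fin.castAdd 2 i)))) rr := hrP _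
          _ = cnF p (clsF p (fun i' => t i' (Fin.castAdd l (⟨k, by omega⟩ : Fin (k+2))))) rr := by
              rw [hclsA i]
          _ = t rr (Fin.castAdd l (⟨k, by omega⟩ : Fin (k+2))) :=
              (hrP (Fin.castAdd l (⟨k, by omega⟩ : Fin (k+2)))).symm) hi
      · rw [← hrP (Fin.castAdd l (⟨k, by omega⟩ : Fin (k+2))),
            ← hrP (Fin.castAdd l (⟨k+1, by omega⟩ : Fin (k+2)))]
        exact hrow
      · exact absurd (calc
          t rr (Fin.castAdd l (⟨k+1, by omega⟩ : Fin (k+2)))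
              = cnF p (clsF p (fun i' => t i' (Fin.castAdd l (⟨k+1, by omega⟩ : Fin (k+2))))) rr :=
              hrP _
          _ = cnF p (clsF p (fun i' => t i' (Fin.natAdd (k+2) j))) rr := by rw [hclsC j]
          _ = t rr (Fin.natAdd (k+2) j) := (hrP (Fin.natAdd (k+2) j)).symm) hj
    have hfin := le_trans hGd (Finset.card_le_card hsubR)
    rcases hR₀ with rfl | rfl
    · exact hR (coreE _ _ hfin)
    · exact hR (coreN _ _ hfin)
end
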